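/- arXiv:1503.08577 — 4 statements merged into one kernel-verified Lean document; each statement's English description precedes it below -/
import Mathlib

section
/- Characterization of the extended signed support for the abstract lasso: Let a₀ ∈ ℝ^P be identifiable with support I = I(a₀). Let J ⊆ {0,…,P−1} and s ∈ {−1,+1}^J be such that I ⊆ J, s_i = sign(a₀_i) for all i ∈ I, and Op_J has full rank, and set v_J = (Op_J^* Op_J)^{-1} s_J. Then (J, s_J) equals the extended signed support ext_±(a₀) if and only if both: (i) for every j ∈ J∖I, either v_j = 0 or s_j = −sign(v_j); and (ii) ‖Op_{J^c}^* Op_J v_J‖_∞ < 1. In that case the minimal-norm certificate is η₀ = Op^* Op_J (Op_J^* Op_J)^{-1} s_J. -/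
/-!
Everything rests on the first-order optimality of the minimal-norm certificate `p₀`: if
`p₀ + t • d` is still a certificate for all small `t > 0`, then `⟪p₀, d⟫ ≥ 0`. Combined with
`⟪p, Op u⟫ = ∑ i, (Op^* p)_i u_i` this compares `p₀` with `q = Op v`.

If `(J, s)` is the extended signed support, the slack `|η₀| < 1` off `J` lets `p₀` move towards
`q`, and `Op^* p₀ = Op^* q` on the support of `v`; together these force `p₀ = q`, which is (ii).
Testing optimality with `d = Op w`, where `Op^* Op w = -s_j e_j` on `J` (solvable because `Op_J`
is injective), gives `s_j v_j = -⟪p₀, d⟫ ≤ 0` for `j ∈ J ∖ I`, which is (i).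
Conversely, (i) and (ii) make `q` a certificate with `‖q‖² ≤ ⟪p₀, q⟫`, and minimality of `p₀`
gives `‖p₀‖² ≤ ⟪p₀, q⟫`, so again `p₀ = q`.
-/

open Filter Topology
open scoped InnerProductSpace InnerProduct

section

variable {H : Type*} [NormedAddCommGroup H] [InnerProductSpace ℝ H]

theorem inner_nonneg_of_eventually_norm_le_norm_add_smul {p d : H}
    (h : ∀ᶠ t in 𝓝[>] (0 : ℝ), ‖p‖ ≤ ‖p + t • d‖) : 0 ≤ ⟪p, d⟫_ℝ := by
  have hlim : Tendsto (fun t : ℝ => 2 * ⟪p, d⟫_ℝ + t * ‖d‖ ^ 2) (𝓝[>] 0)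
      (𝓝 (2 * ⟪p, d⟫_ℝ)) := by
    refine tendsto_nhdsWithin_of_tendsto_nhds ?_
    exact (continuous_const.add (continuous_id.mul continuous_const)).tendsto' 0 _ (by simp)
  have hev : ∀ᶠ t in 𝓝[>] (0 : ℝ), 0 ≤ 2 * ⟪p, d⟫_ℝ + t * ‖d‖ ^ 2 := by
    filter_upwards [h, self_mem_nhdsWithin] with t ht (htpos : 0 < t)
    have hsq : ‖p‖ ^ 2 ≤ ‖p + t • d‖ ^ 2 := pow_le_pow_left₀ (norm_nonneg p) ht 2
    rw [norm_add_sq_real, real_inner_smul_right, norm_smul, Real.norm_of_nonneg htpos.le] at hsq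
    nlinarith
  linarith [ge_of_tendsto hlim hev]

theorem eq_of_norm_sq_le_inner {p q : H} (hp : ‖p‖ ^ 2 ≤ ⟪p, q⟫_ℝ) (hq : ‖q‖ ^ 2 ≤ ⟪p, q⟫_ℝ) :
    p = q := by
  have : ‖p - q‖ ^ 2 ≤ 0 := by rw [norm_sub_sq_real]; linarith
  exact sub_eq_zero.1 (norm_eq_zero.1 (by nlinarith [norm_nonneg (p - q)]))

theorem inner_apply_eq_sum_adjoint [CompleteSpace H] {ι : Type*} [Fintype ι]
    (Op : EuclideanSpace ℝ ι →L[ℝ] H) (p : H) (u : EuclideanSpace ℝ ι) :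
    ⟪p, Op u⟫_ℝ = ∑ i, (Op†) p i * u i := by
  rw [← ContinuousLinearMap.adjoint_inner_left, PiLp.inner_apply]
  simp [mul_comm]

theorem eventually_abs_add_mul_le_one {x y : ℝ} (hx : |x| ≤ 1) (h : |x| < 1 ∨ |x + y| ≤ 1) :
    ∀ᶠ t in 𝓝[>] (0 : ℝ), |x + t * y| ≤ 1 := by
  rcases h with hlt | hxy
  · have : Tendsto (fun t : ℝ => |x + t * y|) (𝓝 0) (𝓝 |x|) :=
      (continuous_const.add (continuous_id.mul continuous_const)).abs.tendsto' 0 _ (by simp)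
    exact nhdsWithin_le_nhds ((this.eventually (gt_mem_nhds hlt)).mono fun _ => le_of_lt)
  · filter_upwards [Ioc_mem_nhdsGT (zero_lt_one' ℝ)] with t ⟨ht0, ht1⟩
    calc |x + t * y| = |(1 - t) * x + t * (x + y)| := by ring_nf
      _ ≤ (1 - t) * |x| + t * |x + y| := by
          refine (abs_add_le _ _).trans ?_
          rw [abs_mul, abs_mul, abs_of_nonneg (by linarith), abs_of_pos ht0]
      _ ≤ 1 := by nlinarith

theorem eq_zero_or_eq_neg_sign_iff_mul_nonpos {s x : ℝ} (hs : s = 1 ∨ s = -1) :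
    (x = 0 ∨ s = -Real.sign x) ↔ s * x ≤ 0 := by
  rcases lt_trichotomy x 0 with hx | rfl | hx
  · rw [Real.sign_of_neg hx]
    rcases hs with rfl | rfl <;> constructor <;> intro h <;> norm_num at h ⊢ <;> linarith
  · simp
  · rw [Real.sign_of_pos hx]
    rcases hs with rfl | rfl <;> constructor <;> intro h <;> norm_num at h ⊢ <;> linarith

variable [CompleteSpace H] {ι : Type*} [Fintype ι] (Op : EuclideanSpace ℝ ι →L[ℝ] H)
  (I : Set ι) (σ : ι → ℝ)

def IsDualCertificate (p : H) : Prop :=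
  (∀ i, |(Op†) p i| ≤ 1) ∧ ∀ i ∈ I, (Op†) p i = σ i

def IsMinNormDualCertificate (p₀ : H) : Prop :=
  IsDualCertificate Op I σ p₀ ∧ ∀ p, IsDualCertificate Op I σ p → ‖p₀‖ ≤ ‖p‖

variable {Op I σ}

theorem IsDualCertificate.eventually_add_smul {p d : H} (hp : IsDualCertificate Op I σ p)
    (hdI : ∀ i ∈ I, (Op†) d i = 0) (hd : ∀ i, |(Op†) p i| < 1 ∨ |(Op†) p i + (Op†) d i| ≤ 1) :
    ∀ᶠ t in 𝓝[>] (0 : ℝ), IsDualCertificate Op I σ (p + t • d) := by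
  filter_upwards [eventually_all.2 fun i => eventually_abs_add_mul_le_one (hp.1 i) (hd i)]
    with t ht
  refine ⟨fun i => by simpa using ht i, fun i hi => by simp [hdI i hi, hp.2 i hi]⟩

theorem IsMinNormDualCertificate.inner_nonneg {p₀ d : H}
    (hp₀ : IsMinNormDualCertificate Op I σ p₀)
    (hdI : ∀ i ∈ I, (Op†) d i = 0) (hd : ∀ i, |(Op†) p₀ i| < 1 ∨ |(Op†) p₀ i + (Op†) d i| ≤ 1) :
    0 ≤ ⟪p₀, d⟫_ℝ :=
  inner_nonneg_of_eventually_norm_le_norm_add_smul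
    ((hp₀.1.eventually_add_smul hdI hd).mono fun _ ht => hp₀.2 _ ht)

theorem IsMinNormDualCertificate.norm_sq_le_inner {p₀ q : H}
    (hp₀ : IsMinNormDualCertificate Op I σ p₀) (hqI : ∀ i ∈ I, (Op†) q i = σ i)
    (hq : ∀ i, |(Op†) p₀ i| < 1 ∨ |(Op†) q i| ≤ 1) : ‖p₀‖ ^ 2 ≤ ⟪p₀, q⟫_ℝ := by
  have h := hp₀.inner_nonneg (d := q - p₀) (fun i hi => by simp [hqI i hi, hp₀.1.2 i hi])
    (fun i => by simpa using hq i)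
  rw [inner_sub_right, real_inner_self_eq_norm_sq] at h
  linarith

theorem exists_supported_adjoint_apply_eq {J : Set ι}
    (hJ : ∀ u : EuclideanSpace ℝ ι, (∀ i ∉ J, u i = 0) → Op u = 0 → u = 0) (b : ι → ℝ) :
    ∃ w : EuclideanSpace ℝ ι, (∀ i ∉ J, w i = 0) ∧ ∀ i ∈ J, (Op†) (Op w) i = b i := by
  classical
  let T : EuclideanSpace ℝ ι →ₗ[ℝ] EuclideanSpace ℝ ι :=
    { toFun := fun u => WithLp.toLp 2 fun i => if i ∈ J then (Op†) (Op u) i else u i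
      map_add' := fun x y => by ext i; by_cases h : i ∈ J <;> simp [h]
      map_smul' := fun c x => by ext i; by_cases h : i ∈ J <;> simp [h] }
  have hT : Function.Injective T := by
    rw [← LinearMap.ker_eq_bot, LinearMap.ker_eq_bot']
    intro u hu
    have hu' (i : ι) : (if i ∈ J then (Op†) (Op u) i else u i) = 0 := congrArg (· i) hu
    have hsupp : ∀ i ∉ J, u i = 0 := fun i hi => by simpa [hi] using hu' i
    refine hJ u hsupp (inner_self_eq_zero (𝕜 := ℝ) |>.1 ?_)
    rw [real_inner_comm, inner_apply_eq_sum_adjoint]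
    refine Finset.sum_eq_zero fun i _ => ?_
    by_cases hi : i ∈ J
    · simp [show (Op†) (Op u) i = 0 by simpa [hi] using hu' i]
    · simp [hsupp i hi]
  obtain ⟨w, hw⟩ := LinearMap.injective_iff_surjective.1 hT
    (WithLp.toLp 2 fun i => if i ∈ J then b i else 0)
  have hw' (i : ι) := congrArg (· i) hw
  refine ⟨w, fun i hi => ?_, fun i hi => ?_⟩
  · simpa [T, hi] using hw' i
  · simpa [T, hi] using hw' i

variable {J : Set ι} {s : ι → ℝ} {v : EuclideanSpace ℝ ι} {p₀ : H}

theorem IsMinNormDualCertificate.eq_of_mul_nonpos (hp₀ : IsMinNormDualCertificate Op I σ p₀)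
    (hIJ : I ⊆ J) (hsI : ∀ i ∈ I, s i = σ i) (hs : ∀ j ∈ J, s j = 1 ∨ s j = -1)
    (hv_supp : ∀ j ∉ J, v j = 0) (hv : ∀ j ∈ J, (Op†) (Op v) j = s j)
    (hsv : ∀ j ∈ J, j ∉ I → s j * v j ≤ 0) (hJc : ∀ k ∉ J, |(Op†) (Op v) k| < 1) :
    p₀ = Op v := by
  refine eq_of_norm_sq_le_inner
    (hp₀.norm_sq_le_inner (fun i hi => by rw [hv i (hIJ hi), hsI i hi]) fun i => Or.inr ?_) ?_
  · by_cases hi : i ∈ J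
    · rcases hs i hi with h | h <;> simp [hv i hi, h]
    · exact (hJc i hi).le
  · have h : 0 ≤ ⟪p₀ - Op v, Op v⟫_ℝ := by
      rw [inner_apply_eq_sum_adjoint]
      refine Finset.sum_nonneg fun i _ => ?_
      by_cases hiJ : i ∈ J
      · by_cases hiI : i ∈ I
        · simp [hv i hiJ, hsI i hiI, hp₀.1.2 i hiI]
        · have hsvi := hsv i hiJ hiI
          rw [map_sub, PiLp.sub_apply, hv i hiJ]
          rcases hs i hiJ with h | h <;> rw [h] at hsvi ⊢ <;> nlinarith [abs_le.1 (hp₀.1.1 i)]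
      · simp [hv_supp i hiJ]
    rw [inner_sub_left, real_inner_self_eq_norm_sq] at h
    linarith

theorem IsMinNormDualCertificate.eq_of_adjoint_eq_on (hp₀ : IsMinNormDualCertificate Op I σ p₀)
    (hIJ : I ⊆ J) (hv_supp : ∀ j ∉ J, v j = 0) (hagree : ∀ j ∈ J, (Op†) (Op v) j = (Op†) p₀ j)
    (hJc : ∀ k ∉ J, |(Op†) p₀ k| < 1) : p₀ = Op v := by
  refine eq_of_norm_sq_le_inner
    (hp₀.norm_sq_le_inner (fun i hi => (hagree i (hIJ hi)).trans (hp₀.1.2 i hi)) fun i => ?_) ?_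
  · by_cases hi : i ∈ J
    · exact Or.inr ((hagree i hi).symm ▸ hp₀.1.1 i)
    · exact Or.inl (hJc i hi)
  · have h : ⟪p₀ - Op v, Op v⟫_ℝ = 0 := by
      rw [inner_apply_eq_sum_adjoint]
      refine Finset.sum_eq_zero fun i _ => ?_
      by_cases hi : i ∈ J
      · simp [hagree i hi]
      · simp [hv_supp i hi]
    rw [inner_sub_left, real_inner_self_eq_norm_sq] at h
    linarith

theorem IsMinNormDualCertificate.mul_nonpos (hp₀ : IsMinNormDualCertificate Op I σ p₀)
    (hJ : ∀ u : EuclideanSpace ℝ ι, (∀ i ∉ J, u i = 0) → Op u = 0 → u = 0) (hIJ : I ⊆ J)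
    (hv_supp : ∀ j ∉ J, v j = 0) (hp₀v : p₀ = Op v) (hηJ : ∀ j ∈ J, (Op†) p₀ j = s j)
    (hJc : ∀ k ∉ J, |(Op†) p₀ k| < 1) {j : ι} (hjJ : j ∈ J) (hjI : j ∉ I) :
    s j * v j ≤ 0 := by
  classical
  obtain ⟨w, -, hw⟩ := exists_supported_adjoint_apply_eq hJ fun i => if i = j then -s j else 0
  have h := hp₀.inner_nonneg (d := Op w)
    (fun i hi => by rw [hw i (hIJ hi), if_neg (ne_of_mem_of_not_mem hi hjI)]) fun i => ?_
  · rw [hp₀v, real_inner_comm, inner_apply_eq_sum_adjoint, Finset.sum_eq_single j] at h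
    · rw [hw j hjJ, if_pos rfl] at h
      linarith
    · intro i _ hij
      by_cases hi : i ∈ J
      · simp [hw i hi, hij]
      · simp [hv_supp i hi]
    · simp
  · by_cases hi : i ∈ J
    · refine Or.inr ?_
      rw [hw i hi]
      split_ifs with hij
      · simp [hij, hηJ j hjJ]
      · simpa using hp₀.1.1 i
    · exact Or.inl (hJc i hi)

end

theorem extended_signed_support_characterization_general
    {H : Type*} [NormedAddCommGroup H] [InnerProductSpace ℝ H] [CompleteSpace H]
    {P : ℕ} (Op : EuclideanSpace ℝ (Fin P) →L[ℝ] H)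
    (a₀ : EuclideanSpace ℝ (Fin P))
    -- the support of a₀
    (I : Set (Fin P))
    -- the minimal-norm dual certificate p₀ and η₀ = Op^* p₀
    (p₀ : H)
    (hp₀_feas : (∀ i, |(ContinuousLinearMap.adjoint Op) p₀ i| ≤ 1) ∧
      ∀ i ∈ I, (ContinuousLinearMap.adjoint Op) p₀ i = Real.sign (a₀ i))
    (hp₀_min : ∀ p : H,
      ((∀ i, |(ContinuousLinearMap.adjoint Op) p i| ≤ 1) ∧
        ∀ i ∈ I, (ContinuousLinearMap.adjoint Op) p i = Real.sign (a₀ i)) →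
      ‖p₀‖ ≤ ‖p‖)
    (η₀ : EuclideanSpace ℝ (Fin P)) (hη₀ : η₀ = (ContinuousLinearMap.adjoint Op) p₀)
    -- the candidate signed set (J, s)
    (J : Set (Fin P)) (s : Fin P → ℝ)
    (hIJ : I ⊆ J)
    (hsI : ∀ i ∈ I, s i = Real.sign (a₀ i))
    (hs_sign : ∀ j ∈ J, s j = 1 ∨ s j = -1)
    -- Op_J has full rank (is injective on vectors supported on J)
    (hfullrank : ∀ u : EuclideanSpace ℝ (Fin P),
      (∀ i, i ∉ J → u i = 0) → Op u = 0 → u = 0)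
    -- v : the vector supported on J with (Op_J^* Op_J) v_J = s_J
    (v : EuclideanSpace ℝ (Fin P))
    (hv_supp : ∀ j, j ∉ J → v j = 0)
    (hv_def : ∀ j ∈ J, (ContinuousLinearMap.adjoint Op) (Op v) j = s j) :
    -- conclusion: the characterization, and the formula for η₀ in that case
    ((((∀ j, j ∈ J ↔ |η₀ j| = 1) ∧ ∀ j ∈ J, s j = η₀ j) ↔
      ((∀ j ∈ J, j ∉ I → v j = 0 ∨ s j = -Real.sign (v j)) ∧
        (∀ k, k ∉ J → |(ContinuousLinearMap.adjoint Op) (Op v) k| < 1))) ∧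
     (((∀ j ∈ J, j ∉ I → v j = 0 ∨ s j = -Real.sign (v j)) ∧
        (∀ k, k ∉ J → |(ContinuousLinearMap.adjoint Op) (Op v) k| < 1)) →
      η₀ = (ContinuousLinearMap.adjoint Op) (Op v))) := by
  have hp₀ : IsMinNormDualCertificate Op I (fun i => Real.sign (a₀ i)) p₀ := ⟨hp₀_feas, hp₀_min⟩
  have hsign (j : Fin P) (hj : j ∈ J) : (v j = 0 ∨ s j = -Real.sign (v j)) ↔ s j * v j ≤ 0 :=
    eq_zero_or_eq_neg_sign_iff_mul_nonpos (hs_sign j hj)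
  have hback : ((∀ j ∈ J, j ∉ I → v j = 0 ∨ s j = -Real.sign (v j)) ∧
      ∀ k, k ∉ J → |(Op†) (Op v) k| < 1) → p₀ = Op v := fun ⟨hi, hii⟩ =>
    hp₀.eq_of_mul_nonpos hIJ hsI hs_sign hv_supp hv_def
      (fun j hj hjI => (hsign j hj).1 (hi j hj hjI)) hii
  subst hη₀
  refine ⟨⟨fun ⟨hext, hηs⟩ => ?_, fun h => ?_⟩, fun h => by rw [hback h]⟩
  · have hηJ (j : Fin P) (hj : j ∈ J) : (Op†) p₀ j = s j := (hηs j hj).symm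
    have hJc (k : Fin P) (hk : k ∉ J) : |(Op†) p₀ k| < 1 :=
      (hp₀_feas.1 k).lt_of_ne (mt (hext k).2 hk)
    have hp₀v : p₀ = Op v :=
      hp₀.eq_of_adjoint_eq_on hIJ hv_supp (fun j hj => (hv_def j hj).trans (hηJ j hj).symm) hJc
    exact ⟨fun j hj hjI =>
      (hsign j hj).2 (hp₀.mul_nonpos hfullrank hIJ hv_supp hp₀v hηJ hJc hj hjI),
      fun k hk => hp₀v ▸ hJc k hk⟩
  · rw [hback h]
    refine ⟨fun j => ⟨fun hj => ?_, fun hj => ?_⟩, fun j hj => (hv_def j hj).symm⟩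
    · rcases hs_sign j hj with hsj | hsj <;> simp [hv_def j hj, hsj]
    · by_contra hjJ
      exact (h.2 j hjJ).ne hj

/-- **Characterization of the extended signed support for the abstract lasso.**
`H` is a real Hilbert space, `Op : ℝ^P → H` a linear operator.  `a₀` is identifiable
(the unique solution of the basis pursuit `min ‖a‖₁ s.t. Op a = Op a₀`), `I` is its
support, `p₀` is the minimal-norm element of
`{p : ‖Op^* p‖_∞ ≤ 1, (Op^* p)_i = sign (a₀)_i on I}` and `η₀ = Op^* p₀` the
minimal-norm certificate.  Given `(J, s)` with `I ⊆ J`, `s = sign a₀` on `I`,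
`s = ±1` on `J`, `Op_J` injective, and `v` the vector supported on `J` with
`Op_J^* Op_J v = s_J` (i.e. `v_J = (Op_J^* Op_J)⁻¹ s_J`), we have:
`(J, s_J)` equals the extended signed support of `a₀` iff
(i) for all `j ∈ J ∖ I`, `v_j = 0` or `s_j = - sign v_j`, and
(ii) `‖Op_{Jᶜ}^* Op_J v_J‖_∞ < 1`;  and in that case `η₀ = Op^* Op_J v_J`. -/
theorem extended_signed_support_characterization
    {H : Type*} [NormedAddCommGroup H] [InnerProductSpace ℝ H] [CompleteSpace H]
    {P : ℕ} (Op : EuclideanSpace ℝ (Fin P) →L[ℝ] H)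
    (a₀ : EuclideanSpace ℝ (Fin P))
    -- a₀ is identifiable
    (hident : ∀ a : EuclideanSpace ℝ (Fin P), Op a = Op a₀ →
      (∑ i, |a i|) ≤ (∑ i, |a₀ i|) → a = a₀)
    -- the support of a₀
    (I : Set (Fin P)) (hI : I = {i : Fin P | a₀ i ≠ 0})
    -- the minimal-norm dual certificate p₀ and η₀ = Op^* p₀
    (p₀ : H)
    (hp₀_feas : (∀ i, |(ContinuousLinearMap.adjoint Op) p₀ i| ≤ 1) ∧
      ∀ i ∈ I, (ContinuousLinearMap.adjoint Op) p₀ i = Real.sign (a₀ i))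
    (hp₀_min : ∀ p : H,
      ((∀ i, |(ContinuousLinearMap.adjoint Op) p i| ≤ 1) ∧
        ∀ i ∈ I, (ContinuousLinearMap.adjoint Op) p i = Real.sign (a₀ i)) →
      ‖p₀‖ ≤ ‖p‖)
    (η₀ : EuclideanSpace ℝ (Fin P)) (hη₀ : η₀ = (ContinuousLinearMap.adjoint Op) p₀)
    -- the candidate signed set (J, s)
    (J : Set (Fin P)) (s : Fin P → ℝ)
    (hIJ : I ⊆ J)
    (hsI : ∀ i ∈ I, s i = Real.sign (a₀ i))
    (hs_sign : ∀ j ∈ J, s j = 1 ∨ s j = -1)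
    -- Op_J has full rank (is injective on vectors supported on J)
    (hfullrank : ∀ u : EuclideanSpace ℝ (Fin P),
      (∀ i, i ∉ J → u i = 0) → Op u = 0 → u = 0)
    -- v : the vector supported on J with (Op_J^* Op_J) v_J = s_J
    (v : EuclideanSpace ℝ (Fin P))
    (hv_supp : ∀ j, j ∉ J → v j = 0)
    (hv_def : ∀ j ∈ J, (ContinuousLinearMap.adjoint Op) (Op v) j = s j) :
    -- conclusion: the characterization, and the formula for η₀ in that case
    ((((∀ j, j ∈ J ↔ |η₀ j| = 1) ∧ ∀ j ∈ J, s j = η₀ j) ↔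
      ((∀ j ∈ J, j ∉ I → v j = 0 ∨ s j = -Real.sign (v j)) ∧
        (∀ k, k ∉ J → |(ContinuousLinearMap.adjoint Op) (Op v) k| < 1))) ∧
     (((∀ j ∈ J, j ∉ I → v j = 0 ∨ s j = -Real.sign (v j)) ∧
        (∀ k, k ∉ J → |(ContinuousLinearMap.adjoint Op) (Op v) k| < 1)) →
      η₀ = (ContinuousLinearMap.adjoint Op) (Op v))) :=
  extended_signed_support_characterization_general Op a₀ I p₀ hp₀_feas hp₀_min η₀ hη₀ J s hIJ hsI
    hs_sign hfullrank v hv_supp hv_def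
end

section
/- Low-noise support recovery on the extended support for the abstract lasso: Let a₀ ∈ ℝ^P ∖ {0} be identifiable, I = I(a₀), J = ext(a₀); assume Op_J has full rank and set v_J = (Op_J^* Op_J)^{-1} sign((η₀)_J). Assume v_j ≠ 0 for every j ∈ J∖I. Then there exist constants C¹ > 0 and C² > 0 (depending only on Op, I and sign(a₀ restricted to I)) such that for every λ with 0 < λ ≤ C¹ · min_{i ∈ I} |a₀_i| and every w ∈ H with ‖w‖ ≤ C² λ, the lasso problem P_λ(Op a₀ + w) has a unique solution â; this solution satisfies I(â) = J and â_J = a₀_J + Op_J^+ w − λ (Op_J^* Op_J)^{-1} sign((η₀)_J), where Op_J^+ = (Op_J^* Op_J)^{-1} Op_J^*. -/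
open scoped BigOperators
noncomputable section

namespace LassoAux

open scoped RealInnerProductSpace

variable {H : Type*} [NormedAddCommGroup H] [InnerProductSpace ℝ H] [CompleteSpace H]
variable {P : ℕ}

local notation "E" => EuclideanSpace ℝ (Fin P)

lemma coord_le_norm (x : E) (i : Fin P) : |x i| ≤ ‖x‖ := by
  have h := abs_real_inner_le_norm (EuclideanSpace.single i (1:ℝ)) x
  simpa [EuclideanSpace.inner_single_left, EuclideanSpace.norm_single] using h

lemma inner_eq_sum (x y : E) : ⟪x, y⟫ = ∑ i, x i * y i := by
  simp [PiLp.inner_apply, RCLike.inner_apply, mul_comm]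

lemma adjoint_coord (Op : E →L[ℝ] H) (h : H) (i : Fin P) :
    (ContinuousLinearMap.adjoint Op h) i = ⟪h, Op (EuclideanSpace.single i 1)⟫ := by
  have := ContinuousLinearMap.adjoint_inner_left Op (EuclideanSpace.single i (1:ℝ)) h
  rw [← this, real_inner_comm]
  simp [EuclideanSpace.inner_single_left]

lemma sign_eq_self_of_abs_eq_one {x : ℝ} (h : |x| = 1) : Real.sign x = x := by
  rcases (abs_eq (by norm_num : (0:ℝ) ≤ 1)).mp h with h1 | h1 <;> rw [h1]
  · exact Real.sign_of_pos (by norm_num)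
  · rw [Real.sign_of_neg (by norm_num)]

lemma abs_sign_of_ne_zero {x : ℝ} (h : x ≠ 0) : |Real.sign x| = 1 := by
  rcases lt_or_gt_of_ne h with h1 | h1
  · rw [Real.sign_of_neg h1]; norm_num
  · rw [Real.sign_of_pos h1]; norm_num

lemma exists_eps (f : Fin P → ℝ) (hf : ∀ k, 0 < f k) :
    ∃ ε : ℝ, 0 < ε ∧ ε ≤ 1 ∧ ∀ k, ε ≤ f k := by
  classical
  set s : Finset ℝ := insert 1 (Finset.image f Finset.univ) with hs
  have hne : s.Nonempty := ⟨1, by simp [hs]⟩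
  refine ⟨s.min' hne, ?_, ?_, ?_⟩
  · rw [Finset.lt_min'_iff]
    intro y hy
    rcases Finset.mem_insert.mp hy with h | h
    · rw [h]; norm_num
    · obtain ⟨k, _, hk⟩ := Finset.mem_image.mp h
      rw [← hk]; exact hf k
  · exact Finset.min'_le _ _ (Finset.mem_insert_self _ _)
  · intro k
    exact Finset.min'_le _ _
      (Finset.mem_insert_of_mem (Finset.mem_image_of_mem f (Finset.mem_univ k)))

open Classical in
def projL (J : Set (Fin P)) : E →ₗ[ℝ] E where
  toFun u := WithLp.toLp 2 (fun i => if i ∈ J then u i else 0)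
  map_add' x y := by ext i; by_cases h : i ∈ J <;> simp [h]
  map_smul' c x := by ext i; by_cases h : i ∈ J <;> simp [h]

lemma projL_apply_mem {J : Set (Fin P)} {i : Fin P} (h : i ∈ J) (u : E) :
    projL J u i = u i := by simp [projL, h]

lemma projL_apply_not_mem {J : Set (Fin P)} {i : Fin P} (h : i ∉ J) (u : E) :
    projL J u i = 0 := by simp [projL, h]

lemma gram_inj (Op : E →L[ℝ] H) (J : Set (Fin P))
    (hfullrank : ∀ u : E, (∀ i, i ∉ J → u i = 0) → Op u = 0 → u = 0)
    (u : E) (hsupp : ∀ i, i ∉ J → u i = 0)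
    (hker : ∀ j ∈ J, ContinuousLinearMap.adjoint Op (Op u) j = 0) : u = 0 := by
  apply hfullrank u hsupp
  rw [← inner_self_eq_zero (𝕜 := ℝ)]
  rw [← ContinuousLinearMap.adjoint_inner_left, inner_eq_sum]
  apply Finset.sum_eq_zero
  intro i _
  by_cases h : i ∈ J
  · rw [hker i h, zero_mul]
  · rw [hsupp i h, mul_zero]

lemma projL_norm_le (J : Set (Fin P)) (u : E) : ‖projL J u‖ ≤ ‖u‖ := by
  rw [EuclideanSpace.norm_eq, EuclideanSpace.norm_eq]
  apply Real.sqrt_le_sqrt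
  apply Finset.sum_le_sum
  intro i _
  by_cases h : i ∈ J
  · rw [projL_apply_mem h]
  · rw [projL_apply_not_mem h]; simp; positivity

lemma solve (Op : E →L[ℝ] H) (J : Set (Fin P))
    (hfullrank : ∀ u : E, (∀ i, i ∉ J → u i = 0) → Op u = 0 → u = 0) :
    ∃ CS : ℝ, 0 < CS ∧ ∀ b : E, ∃ u : E,
      (∀ i, i ∉ J → u i = 0) ∧
      (∀ j ∈ J, ContinuousLinearMap.adjoint Op (Op u) j = b j) ∧
      ‖u‖ ≤ CS * ‖b‖ := by
  set Pl := projL (P := P) J with hPl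
  set T : E →ₗ[ℝ] E := ((ContinuousLinearMap.adjoint Op).comp Op).toLinearMap with hT
  set A : E →ₗ[ℝ] E := (Pl ∘ₗ T ∘ₗ Pl) + (LinearMap.id - Pl) with hA
  have hAapply : ∀ u : E, ∀ i : Fin P,
      A u i = Pl (ContinuousLinearMap.adjoint Op (Op (Pl u))) i + (u i - Pl u i) := by
    intro u i
    simp [hA, hT, LinearMap.add_apply, LinearMap.sub_apply, PiLp.add_apply, PiLp.sub_apply]
  have hsupp_of : ∀ u : E, (∀ i, i ∉ J → A u i = 0) → ∀ i, i ∉ J → u i = 0 := by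
    intro u hu i hi
    have := hAapply u i
    rw [hu i hi, projL_apply_not_mem hi, projL_apply_not_mem hi] at this
    linarith [this]
  have hinj : Function.Injective A := by
    rw [injective_iff_map_eq_zero]
    intro u hu
    have hzero : ∀ i, A u i = 0 := by intro i; rw [hu]; rfl
    have hs : ∀ i, i ∉ J → u i = 0 := hsupp_of u (fun i hi => hzero i)
    have hPlu : Pl u = u := by
      ext i
      by_cases h : i ∈ J
      · exact projL_apply_mem h u
      · rw [projL_apply_not_mem h, hs i h]
    apply gram_inj Op J hfullrank u hs
    intro j hj
    have := hAapply u j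
    rw [hzero j, hPlu, projL_apply_mem hj] at this
    linarith [this]
  have hbij : Function.Bijective A := ⟨hinj, LinearMap.injective_iff_surjective.mp hinj⟩
  set e : E ≃ₗ[ℝ] E := LinearEquiv.ofBijective A hbij with he
  set SolC : E →L[ℝ] E := LinearMap.toContinuousLinearMap (e.symm : E →ₗ[ℝ] E) with hSolC
  refine ⟨‖SolC‖ + 1, by positivity, fun b => ?_⟩
  set u : E := e.symm (Pl b) with hu
  have hAu : A u = Pl b := by
    have : e u = Pl b := by rw [hu, LinearEquiv.apply_symm_apply]
    simpa [he, LinearEquiv.ofBijective_apply] using this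
  have hAu' : ∀ i, A u i = Pl b i := fun i => by rw [hAu]
  have hs : ∀ i, i ∉ J → u i = 0 := by
    apply hsupp_of
    intro i hi
    rw [hAu' i, projL_apply_not_mem hi]
  have hPlu : Pl u = u := by
    ext i
    by_cases h : i ∈ J
    · exact projL_apply_mem h u
    · rw [projL_apply_not_mem h, hs i h]
  refine ⟨u, hs, ?_, ?_⟩
  · intro j hj
    have := hAapply u j
    rw [hAu' j, hPlu, projL_apply_mem hj, projL_apply_mem hj] at this
    linarith [this]
  · have h1 : u = SolC (Pl b) := by rw [hu, hSolC]; rfl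
    calc ‖u‖ = ‖SolC (Pl b)‖ := by rw [h1]
    _ ≤ ‖SolC‖ * ‖Pl b‖ := SolC.le_opNorm _
    _ ≤ ‖SolC‖ * ‖b‖ := by
        apply mul_le_mul_of_nonneg_left (projL_norm_le J b) (norm_nonneg _)
    _ ≤ (‖SolC‖ + 1) * ‖b‖ := by nlinarith [norm_nonneg b, norm_nonneg SolC]


set_option maxHeartbeats 1600000 in
theorem cert (Op : E →L[ℝ] H) (a₀ : E)
    (I : Set (Fin P)) (hI : I = {i : Fin P | a₀ i ≠ 0})
    (p₀ : H)
    (hfeas : ∀ i, |(ContinuousLinearMap.adjoint Op) p₀ i| ≤ 1)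
    (heqI : ∀ i ∈ I, (ContinuousLinearMap.adjoint Op) p₀ i = Real.sign (a₀ i))
    (hmin : ∀ p : H, ((∀ i, |(ContinuousLinearMap.adjoint Op) p i| ≤ 1) ∧
        ∀ i ∈ I, (ContinuousLinearMap.adjoint Op) p i = Real.sign (a₀ i)) → ‖p₀‖ ≤ ‖p‖)
    (η₀ : E) (hη₀ : η₀ = (ContinuousLinearMap.adjoint Op) p₀)
    (J : Set (Fin P)) (hJ : J = {j : Fin P | |η₀ j| = 1})
    (hfullrank : ∀ u : E, (∀ i, i ∉ J → u i = 0) → Op u = 0 → u = 0)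
    (v : E) (hv_supp : ∀ j, j ∉ J → v j = 0)
    (hv_def : ∀ j ∈ J, (ContinuousLinearMap.adjoint Op) (Op v) j = Real.sign (η₀ j)) :
    Op v = p₀ ∧ (∀ j ∈ J, j ∉ I → η₀ j * v j ≤ 0) := by
  classical
  have hIJ : I ⊆ J := by
    intro i hi
    rw [hJ]
    have : η₀ i = Real.sign (a₀ i) := by rw [hη₀]; exact heqI i hi
    rw [Set.mem_setOf_eq, this]
    exact abs_sign_of_ne_zero (by rw [hI] at hi; exact hi)
  have habs : ∀ k, |η₀ k| ≤ 1 := fun k => by rw [hη₀]; exact hfeas k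
  have hoff : ∀ k, k ∉ J → |η₀ k| < 1 := by
    intro k hk
    rcases lt_or_eq_of_le (habs k) with h | h
    · exact h
    · exact absurd (by rw [hJ]; exact h) hk
  -- the epsilon
  obtain ⟨ε, hε0, hε1, hεf⟩ := exists_eps
    (fun k => if k ∈ J then (1:ℝ) else 1 - |η₀ k|)
    (fun k => by
      by_cases h : k ∈ J
      · simp [h]
      · simp only [if_neg h]
        linarith [hoff k h])
  have hεoff : ∀ k, k ∉ J → |η₀ k| ≤ 1 - ε := by
    intro k hk
    have := hεf k
    rw [if_neg hk] at this
    linarith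
  -- feasibility of perturbations
  have hfeas_of : ∀ (d : H) (t : ℝ), 0 ≤ t →
      t * ‖ContinuousLinearMap.adjoint Op d‖ ≤ ε →
      (∀ i ∈ I, ContinuousLinearMap.adjoint Op d i = 0) →
      (∀ k ∈ J, |η₀ k - t * ContinuousLinearMap.adjoint Op d k| ≤ 1) →
      ((∀ i, |(ContinuousLinearMap.adjoint Op) (p₀ - t • d) i| ≤ 1) ∧
       ∀ i ∈ I, (ContinuousLinearMap.adjoint Op) (p₀ - t • d) i = Real.sign (a₀ i)) := by
    intro d t ht htb hId hJd
    have hco : ∀ i, (ContinuousLinearMap.adjoint Op) (p₀ - t • d) i =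
        η₀ i - t * (ContinuousLinearMap.adjoint Op d) i := by
      intro i
      rw [map_sub, map_smul, hη₀]
      simp [PiLp.sub_apply, PiLp.smul_apply, smul_eq_mul]
    constructor
    · intro i
      rw [hco i]
      by_cases h : i ∈ J
      · exact hJd i h
      · have h1 : |η₀ i| ≤ 1 - ε := hεoff i h
        have h2 : |t * ContinuousLinearMap.adjoint Op d i| ≤ ε := by
          rw [abs_mul, abs_of_nonneg ht]
          calc t * |ContinuousLinearMap.adjoint Op d i|
              ≤ t * ‖ContinuousLinearMap.adjoint Op d‖ :=
                mul_le_mul_of_nonneg_left (coord_le_norm _ i) ht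
            _ ≤ ε := htb
        calc |η₀ i - t * ContinuousLinearMap.adjoint Op d i|
            ≤ |η₀ i| + |t * ContinuousLinearMap.adjoint Op d i| := abs_sub _ _
          _ ≤ (1 - ε) + ε := add_le_add h1 h2
          _ = 1 := by ring
    · intro i hi
      rw [hco i, hId i hi, mul_zero, sub_zero, hη₀]
      exact heqI i hi
  -- Step 1: p₀ ∈ Op(J-supported vectors), hence Op v = p₀
  set K : Submodule ℝ H := LinearMap.range (Op.toLinearMap ∘ₗ projL J) with hK
  set pr : H := ↑(K.orthogonalProjectionOnto p₀) with hpr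
  set r : H := p₀ - pr with hr
  have hrK : r ∈ Kᗮ := Submodule.sub_starProjection_mem_orthogonal (K := K) p₀
  have hOpsingle : ∀ k ∈ J, Op (EuclideanSpace.single k 1) ∈ K := by
    intro k hk
    rw [hK, LinearMap.mem_range]
    refine ⟨EuclideanSpace.single k 1, ?_⟩
    have : projL J (EuclideanSpace.single k (1:ℝ)) = EuclideanSpace.single k 1 := by
      ext i
      by_cases h : i ∈ J
      · exact projL_apply_mem h _
      · rw [projL_apply_not_mem h, EuclideanSpace.single_apply,
          if_neg (by rintro rfl; exact h hk)]
    simp [LinearMap.comp_apply, this]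
  have hadj_r : ∀ k ∈ J, (ContinuousLinearMap.adjoint Op r) k = 0 := by
    intro k hk
    rw [adjoint_coord]
    exact (Submodule.mem_orthogonal' K r).mp hrK _ (hOpsingle k hk)
  have hrzero : r = 0 := by
    set t : ℝ := ε / (‖ContinuousLinearMap.adjoint Op r‖ + 1) with htdef
    have hden : (0:ℝ) < ‖ContinuousLinearMap.adjoint Op r‖ + 1 := by positivity
    have ht0 : 0 < t := div_pos hε0 hden
    have ht1 : t ≤ 1 := by
      rw [htdef, div_le_one hden]
      linarith [norm_nonneg (ContinuousLinearMap.adjoint Op r)]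
    have htb : t * ‖ContinuousLinearMap.adjoint Op r‖ ≤ ε := by
      rw [htdef, div_mul_eq_mul_div, div_le_iff₀ hden]
      nlinarith [norm_nonneg (ContinuousLinearMap.adjoint Op r), hε0]
    have hfeasp := hfeas_of r t ht0.le htb
      (fun i hi => hadj_r i (hIJ hi))
      (fun k hk => by rw [hadj_r k hk, mul_zero, sub_zero]; exact habs k)
    have hnorm := hmin _ hfeasp
    have hprK : pr ∈ K := (K.orthogonalProjectionOnto p₀).2
    have hinner : ⟪p₀, r⟫ = ‖r‖^2 := by
      have hp : p₀ = pr + r := by rw [hr]; abel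
      rw [hp, inner_add_left, Submodule.inner_right_of_mem_orthogonal hprK hrK,
        zero_add, real_inner_self_eq_norm_sq]
    have hexp : ‖p₀ - t • r‖^2 = ‖p₀‖^2 - 2 * t * ‖r‖^2 + t^2 * ‖r‖^2 := by
      rw [norm_sub_sq_real, real_inner_smul_right, hinner, norm_smul,
        Real.norm_eq_abs, abs_of_nonneg ht0.le, mul_pow]
      ring
    have hsq : ‖p₀‖^2 ≤ ‖p₀ - t • r‖^2 :=
      pow_le_pow_left₀ (norm_nonneg _) hnorm 2
    rw [hexp] at hsq
    have key : (2*t - t^2) * ‖r‖^2 ≤ 0 := by nlinarith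
    have hpos : 0 < 2*t - t^2 := by nlinarith
    have hr2 : ‖r‖^2 ≤ 0 :=
      le_of_mul_le_mul_left (by rw [mul_zero]; exact key) hpos
    have h0 : ‖r‖^2 = 0 := le_antisymm hr2 (sq_nonneg _)
    have : ‖r‖ = 0 := by
      have := sq_eq_zero_iff.mp h0
      exact this
    exact norm_eq_zero.mp this
  have hp₀K : p₀ ∈ K := by
    have : p₀ = pr := by rw [hr, sub_eq_zero] at hrzero; exact hrzero
    rw [this]
    exact (K.orthogonalProjectionOnto p₀).2
  obtain ⟨c, hc⟩ := LinearMap.mem_range.mp (hK ▸ hp₀K)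
  set c' : E := projL J c with hc'
  have hcOp : Op c' = p₀ := by
    rw [hc']
    simpa [LinearMap.comp_apply] using hc
  have hc'supp : ∀ i, i ∉ J → c' i = 0 := fun i hi => projL_apply_not_mem hi c
  have hc'v : c' = v := by
    have hd : c' - v = 0 := by
      apply gram_inj Op J hfullrank
      · intro i hi
        have h1 := hc'supp i hi
        have h2 := hv_supp i hi
        simp [PiLp.sub_apply, h1, h2]
      · intro j hj
        have hsignj : Real.sign (η₀ j) = η₀ j :=
          sign_eq_self_of_abs_eq_one (by rw [hJ] at hj; exact hj)
        rw [map_sub, map_sub]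
        simp only [PiLp.sub_apply]
        rw [hcOp, hv_def j hj, hsignj, ← hη₀]
        ring
    exact sub_eq_zero.mp hd
  refine ⟨by rw [← hc'v]; exact hcOp, ?_⟩
  intro j hj hjI
  have hOpv : Op v = p₀ := by rw [← hc'v]; exact hcOp
  obtain ⟨CS, hCS, hsolve⟩ := solve Op J hfullrank
  obtain ⟨z, hz_supp, hz_eq, _⟩ := hsolve (EuclideanSpace.single j (η₀ j))
  set g : E := ContinuousLinearMap.adjoint Op (Op z) with hg
  have hgJ : ∀ k ∈ J, g k = if k = j then η₀ j else 0 := by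
    intro k hk
    rw [hz_eq k hk, EuclideanSpace.single_apply]
  have hηj : |η₀ j| = 1 := by rw [hJ] at hj; exact hj
  set Y : ℝ := ‖Op z‖^2 with hY
  set X : ℝ := ⟪p₀, Op z⟫ with hX
  have hkey : ∀ t : ℝ, 0 < t → t ≤ 1 → t * ‖g‖ ≤ ε → 2 * X ≤ t * Y := by
    intro t ht ht1 htg
    have hfeasp := hfeas_of (Op z) t ht.le (by rw [← hg]; exact htg) ?_ ?_
    · have hnorm := hmin _ hfeasp
      have hsq : ‖p₀‖^2 ≤ ‖p₀ - t • Op z‖^2 := pow_le_pow_left₀ (norm_nonneg _) hnorm 2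
      rw [norm_sub_sq_real, real_inner_smul_right, norm_smul, Real.norm_eq_abs,
        abs_of_nonneg ht.le, mul_pow] at hsq
      have h2 : 2 * (t * X) ≤ t^2 * Y := by rw [hX, hY]; nlinarith [hsq]
      have h3 := (mul_le_mul_iff_right₀ ht).mp (show t*(2*X) ≤ t*(t*Y) by nlinarith [h2])
      linarith
    · intro i hi
      rw [← hg, hgJ i (hIJ hi), if_neg (by rintro rfl; exact hjI hi)]
    · intro k hk
      rw [← hg]
      by_cases hkj : k = j
      · subst hkj
        rw [hgJ k hk, if_pos rfl]
        have he : η₀ k - t * η₀ k = (1 - t) * η₀ k := by ring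
        rw [he, abs_mul, hηj, mul_one, abs_of_nonneg (by linarith)]
        linarith
      · rw [hgJ k hk, if_neg hkj, mul_zero, sub_zero]
        exact habs k
  have hY0 : 0 ≤ Y := by rw [hY]; positivity
  set t₀ : ℝ := min 1 (ε / (‖g‖ + 1)) with ht₀def
  have hgn : (0:ℝ) < ‖g‖ + 1 := by positivity
  have ht₀ : 0 < t₀ := lt_min (by norm_num) (div_pos hε0 hgn)
  have ht₀g : ∀ t : ℝ, 0 < t → t ≤ t₀ → t * ‖g‖ ≤ ε := by
    intro t ht htt
    have h1 : t ≤ ε / (‖g‖ + 1) := le_trans htt (min_le_right _ _)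
    have h2 : t * ‖g‖ ≤ (ε / (‖g‖ + 1)) * ‖g‖ := mul_le_mul_of_nonneg_right h1 (norm_nonneg _)
    calc t * ‖g‖ ≤ (ε / (‖g‖ + 1)) * ‖g‖ := h2
      _ ≤ ε := by rw [div_mul_eq_mul_div, div_le_iff₀ hgn]; nlinarith [norm_nonneg g, hε0]
  have hXle : X ≤ 0 := by
    by_contra hX0
    push_neg at hX0
    have hYpos : (0:ℝ) < Y + 1 := by linarith
    set t : ℝ := min t₀ (X / (Y + 1)) with htdef
    have ht : 0 < t := lt_min ht₀ (div_pos hX0 hYpos)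
    have htt₀ : t ≤ t₀ := min_le_left _ _
    have h2 := hkey t ht (le_trans htt₀ (min_le_left _ _)) (ht₀g t ht htt₀)
    have h3 : t * (Y + 1) ≤ X := by
      have h4 : t ≤ X / (Y + 1) := min_le_right _ _
      rw [← le_div_iff₀ hYpos]
      exact h4
    nlinarith
  have hXeq : X = η₀ j * v j := by
    rw [hX, ← hOpv, real_inner_comm, ← ContinuousLinearMap.adjoint_inner_left,
      ← hg, inner_eq_sum]
    rw [Finset.sum_eq_single j]
    · rw [hgJ j hj, if_pos rfl]
    · intro k _ hkj
      by_cases hk : k ∈ J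
      · rw [hgJ k hk, if_neg hkj, zero_mul]
      · rw [hv_supp k hk, mul_zero]
    · intro h; exact absurd (Finset.mem_univ j) h
  rw [hXeq] at hXle
  exact hXle


lemma lasso_expand (Op : E →L[ℝ] H) (y : H) (lam : ℝ) (ahat a : E)
    (η : E) (hη : η = ContinuousLinearMap.adjoint Op (y - Op ahat)) :
    (1/2) * ‖y - Op a‖^2 + lam * ∑ i, |a i| =
    ((1/2) * ‖y - Op ahat‖^2 + lam * ∑ i, |ahat i|)
      + (1/2) * ‖Op (a - ahat)‖^2
      + (∑ i, (lam * |a i| - η i * a i))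
      + ((∑ i, η i * ahat i) - lam * ∑ i, |ahat i|) := by
  have h1 : y - Op a = (y - Op ahat) - Op (a - ahat) := by
    rw [map_sub]; abel
  have h2 : ⟪y - Op ahat, Op (a - ahat)⟫ = (∑ i, η i * a i) - ∑ i, η i * ahat i := by
    rw [← ContinuousLinearMap.adjoint_inner_left, ← hη, inner_eq_sum,
      ← Finset.sum_sub_distrib]
    apply Finset.sum_congr rfl
    intro i _
    simp only [PiLp.sub_apply]
    ring
  have h3 : ∑ i, (lam * |a i| - η i * a i) =
      lam * (∑ i, |a i|) - ∑ i, η i * a i := by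
    rw [Finset.sum_sub_distrib, Finset.mul_sum]
  rw [h1, norm_sub_sq_real, h2, h3]
  ring

lemma sign_mul_self_eq_abs {x : ℝ} (h : x ≠ 0) : Real.sign x * x = |x| := by
  rcases lt_or_gt_of_ne h with h1 | h1
  · rw [Real.sign_of_neg h1, abs_of_neg h1]; ring
  · rw [Real.sign_of_pos h1, abs_of_pos h1]; ring

end LassoAux

open LassoAux in
set_option maxHeartbeats 1600000 in
/-- **Low-noise support recovery on the extended support for the abstract lasso.**
`a₀ ∈ ℝ^P ∖ {0}` is identifiable, `I` its support, `J = ext(a₀)` the extended support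
(saturation set of the minimal-norm certificate `η₀ = Op^* p₀`), `Op_J` has full rank
and `v` is the vector supported on `J` with `(Op_J^* Op_J) v_J = sign((η₀)_J)`.
If `v_j ≠ 0` for every `j ∈ J ∖ I`, then there exist `C¹, C² > 0` such that for every
`0 < λ ≤ C¹ · min_{i∈I} |a₀_i|` and every `w` with `‖w‖ ≤ C² λ`, the lasso
`min (1/2)‖Op a₀ + w − Op a‖² + λ‖a‖₁` has a unique solution `ahat`, which satisfies
`supp ahat = J` and `ahat_J = (a₀)_J + Op_J^+ w − λ (Op_J^* Op_J)⁻¹ sign((η₀)_J)`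
(the last identity being encoded by the normal equations
`Op_J^* (Op (ahat − a₀ + λ v)) = Op_J^* w`). -/
theorem lasso_low_noise_extended_support_recovery
    {H : Type*} [NormedAddCommGroup H] [InnerProductSpace ℝ H] [CompleteSpace H]
    {P : ℕ} (Op : EuclideanSpace ℝ (Fin P) →L[ℝ] H)
    (a₀ : EuclideanSpace ℝ (Fin P)) (ha₀ : a₀ ≠ 0)
    -- a₀ is identifiable
    (hident : ∀ a : EuclideanSpace ℝ (Fin P), Op a = Op a₀ →
      (∑ i, |a i|) ≤ (∑ i, |a₀ i|) → a = a₀)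
    -- the support of a₀
    (I : Set (Fin P)) (hI : I = {i : Fin P | a₀ i ≠ 0})
    -- the minimal-norm dual certificate p₀ and η₀ = Op^* p₀
    (p₀ : H)
    (hp₀_feas : (∀ i, |(ContinuousLinearMap.adjoint Op) p₀ i| ≤ 1) ∧
      ∀ i ∈ I, (ContinuousLinearMap.adjoint Op) p₀ i = Real.sign (a₀ i))
    (hp₀_min : ∀ p : H,
      ((∀ i, |(ContinuousLinearMap.adjoint Op) p i| ≤ 1) ∧
        ∀ i ∈ I, (ContinuousLinearMap.adjoint Op) p i = Real.sign (a₀ i)) →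
      ‖p₀‖ ≤ ‖p‖)
    (η₀ : EuclideanSpace ℝ (Fin P)) (hη₀ : η₀ = (ContinuousLinearMap.adjoint Op) p₀)
    -- J is the extended support
    (J : Set (Fin P)) (hJ : J = {j : Fin P | |η₀ j| = 1})
    -- Op_J has full rank
    (hfullrank : ∀ u : EuclideanSpace ℝ (Fin P),
      (∀ i, i ∉ J → u i = 0) → Op u = 0 → u = 0)
    -- v : the vector supported on J with (Op_J^* Op_J) v_J = sign((η₀)_J)
    (v : EuclideanSpace ℝ (Fin P))
    (hv_supp : ∀ j, j ∉ J → v j = 0)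
    (hv_def : ∀ j ∈ J, (ContinuousLinearMap.adjoint Op) (Op v) j = Real.sign (η₀ j))
    -- assumption: v_j ≠ 0 on J ∖ I
    (hv_ne : ∀ j ∈ J, j ∉ I → v j ≠ 0) :
    ∃ C₁ C₂ : ℝ, 0 < C₁ ∧ 0 < C₂ ∧
      ∀ lam : ℝ, 0 < lam → (∀ i ∈ I, lam ≤ C₁ * |a₀ i|) →
      ∀ w : H, ‖w‖ ≤ C₂ * lam →
      ∃ ahat : EuclideanSpace ℝ (Fin P),
        -- ahat is a solution of the lasso P_λ(Op a₀ + w) …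
        (∀ a : EuclideanSpace ℝ (Fin P),
          (1/2) * ‖Op a₀ + w - Op ahat‖^2 + lam * ∑ i, |ahat i| ≤
          (1/2) * ‖Op a₀ + w - Op a‖^2 + lam * ∑ i, |a i|) ∧
        -- … and it is the unique one
        (∀ a' : EuclideanSpace ℝ (Fin P),
          (∀ a : EuclideanSpace ℝ (Fin P),
            (1/2) * ‖Op a₀ + w - Op a'‖^2 + lam * ∑ i, |a' i| ≤
            (1/2) * ‖Op a₀ + w - Op a‖^2 + lam * ∑ i, |a i|) → a' = ahat) ∧
        -- the support of ahat is exactly J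
        {i : Fin P | ahat i ≠ 0} = J ∧
        -- ahat_J = (a₀)_J + Op_J^+ w − λ (Op_J^* Op_J)⁻¹ sign((η₀)_J), via normal equations
        (∀ j ∈ J, (ContinuousLinearMap.adjoint Op) (Op (ahat - a₀ + lam • v)) j =
          (ContinuousLinearMap.adjoint Op) w j) := by
  classical
  obtain ⟨hOpv, hsign⟩ := cert Op a₀ I hI p₀ hp₀_feas.1 hp₀_feas.2 hp₀_min η₀ hη₀ J hJ
    hfullrank v hv_supp hv_def
  have hηv : ∀ i, ContinuousLinearMap.adjoint Op (Op v) i = η₀ i := by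
    intro i; rw [hOpv, ← hη₀]
  obtain ⟨CS, hCS, hsolve⟩ := solve Op J hfullrank
  have hIJ : I ⊆ J := by
    intro i hi
    have hsi : η₀ i = Real.sign (a₀ i) := by rw [hη₀]; exact hp₀_feas.2 i hi
    rw [hJ]
    show |η₀ i| = 1
    rw [hsi]
    exact abs_sign_of_ne_zero (by rw [hI] at hi; exact hi)
  have habs : ∀ k, |η₀ k| ≤ 1 := fun k => by rw [hη₀]; exact hp₀_feas.1 k
  have hoff : ∀ k, k ∉ J → |η₀ k| < 1 := by
    intro k hk
    rcases lt_or_eq_of_le (habs k) with h | h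
    · exact h
    · exact absurd (by rw [hJ]; exact h) hk
  obtain ⟨ε, hε0, hε1, hεf⟩ := exists_eps
    (fun k => if k ∈ J then (1:ℝ) else 1 - |η₀ k|)
    (fun k => by
      by_cases h : k ∈ J
      · simp [h]
      · simp only [if_neg h]
        linarith [hoff k h])
  have hεoff : ∀ k, k ∉ J → |η₀ k| ≤ 1 - ε := by
    intro k hk
    have := hεf k
    rw [if_neg hk] at this
    linarith
  obtain ⟨mv, hmv0, hmv1, hmvf⟩ := exists_eps
    (fun j => if j ∈ J ∧ j ∉ I then |v j| else 1)
    (fun j => by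
      show 0 < if j ∈ J ∧ j ∉ I then |v j| else 1
      by_cases h : j ∈ J ∧ j ∉ I
      · rw [if_pos h]
        exact abs_pos.mpr (hv_ne j h.1 h.2)
      · rw [if_neg h]; norm_num)
  have hmv : ∀ j ∈ J, j ∉ I → mv ≤ |v j| := by
    intro j hj hjI
    have := hmvf j
    rwa [if_pos (show j ∈ J ∧ j ∉ I from ⟨hj, hjI⟩)] at this
  -- constants
  set CO : ℝ := ‖Op‖ + 1 with hCOdef
  have hCO : 0 < CO := by positivity
  set Ku : ℝ := CS * CO with hKudef
  have hKu : 0 < Ku := mul_pos hCS hCO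
  set Kq : ℝ := CO * (1 + CO * Ku) with hKqdef
  have hKq : 0 < Kq := by positivity
  set C₂ : ℝ := min (ε / (2 * (Kq + 1))) (mv / (2 * (Ku + 1))) with hC₂def
  have hC₂ : 0 < C₂ := lt_min (by positivity) (by positivity)
  set C₁ : ℝ := 1 / (2 * (C₂ * Ku + ‖v‖ + 1)) with hC₁def
  have hden : (0:ℝ) < C₂ * Ku + ‖v‖ + 1 := by positivity
  have hC₁ : 0 < C₁ := by positivity
  refine ⟨C₁, C₂, hC₁, hC₂, ?_⟩
  intro lam hlam hlamI w hw
  obtain ⟨u, hu_supp, hu_eq, hu_norm⟩ := hsolve (ContinuousLinearMap.adjoint Op w)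
  -- norm bounds
  have hadj_norm : ‖(ContinuousLinearMap.adjoint Op : H →L[ℝ] EuclideanSpace ℝ (Fin P))‖ = ‖Op‖ :=
    ContinuousLinearMap.adjoint.norm_map Op
  have hadjw : ∀ h : H, ‖ContinuousLinearMap.adjoint Op h‖ ≤ CO * ‖h‖ := by
    intro h
    calc ‖ContinuousLinearMap.adjoint Op h‖ ≤ ‖Op‖ * ‖h‖ := by
          rw [← hadj_norm]; exact ContinuousLinearMap.le_opNorm _ _
      _ ≤ CO * ‖h‖ := by
          apply mul_le_mul_of_nonneg_right _ (norm_nonneg _)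
          rw [hCOdef]; linarith
  have hun : ‖u‖ ≤ Ku * ‖w‖ := by
    calc ‖u‖ ≤ CS * ‖ContinuousLinearMap.adjoint Op w‖ := hu_norm
      _ ≤ CS * (CO * ‖w‖) := mul_le_mul_of_nonneg_left (hadjw w) hCS.le
      _ = Ku * ‖w‖ := by rw [hKudef]; ring
  have huc : ∀ i, |u i| ≤ Ku * ‖w‖ := fun i => le_trans (coord_le_norm u i) hun
  set ahat : EuclideanSpace ℝ (Fin P) := a₀ + u - lam • v with hahat
  have hahat_co : ∀ i, ahat i = a₀ i + u i - lam * v i := by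
    intro i
    rw [hahat]
    simp [PiLp.add_apply, PiLp.sub_apply, PiLp.smul_apply, smul_eq_mul]
  set y : H := Op a₀ + w with hy
  have hyd : y - Op ahat = (w - Op u) + lam • Op v := by
    rw [hahat, hy, map_sub, map_add, map_smul]
    abel
  set η : EuclideanSpace ℝ (Fin P) := ContinuousLinearMap.adjoint Op (y - Op ahat) with hη
  set q : EuclideanSpace ℝ (Fin P) := ContinuousLinearMap.adjoint Op (w - Op u) with hq
  have hηco : ∀ i, η i = q i + lam * η₀ i := by
    intro i
    rw [hη, hyd, map_add, map_smul]
    simp only [PiLp.add_apply, PiLp.smul_apply, smul_eq_mul]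
    rw [hηv i, ← hq]
  have hqJ : ∀ j ∈ J, q j = 0 := by
    intro j hj
    rw [hq, map_sub]
    simp only [PiLp.sub_apply]
    rw [hu_eq j hj]
    ring
  have hqn : ‖q‖ ≤ Kq * ‖w‖ := by
    have h1 : ‖w - Op u‖ ≤ (1 + CO * Ku) * ‖w‖ := by
      calc ‖w - Op u‖ ≤ ‖w‖ + ‖Op u‖ := norm_sub_le _ _
        _ ≤ ‖w‖ + ‖Op‖ * ‖u‖ := by linarith [ContinuousLinearMap.le_opNorm Op u]
        _ ≤ ‖w‖ + CO * (Ku * ‖w‖) := by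
            have hOpCO : ‖Op‖ ≤ CO := by rw [hCOdef]; linarith
            have := mul_le_mul hOpCO hun (norm_nonneg u) hCO.le
            linarith
        _ = (1 + CO * Ku) * ‖w‖ := by ring
    calc ‖q‖ ≤ CO * ‖w - Op u‖ := hadjw _
      _ ≤ CO * ((1 + CO * Ku) * ‖w‖) := by
          apply mul_le_mul_of_nonneg_left h1 hCO.le
      _ = Kq * ‖w‖ := by rw [hKqdef]; ring
  have hqc : ∀ i, |q i| ≤ Kq * ‖w‖ := fun i => le_trans (coord_le_norm q i) hqn
  -- the three smallness estimates
  have hwC : ‖w‖ ≤ C₂ * lam := hw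
  have hKuw : Ku * ‖w‖ ≤ (mv / 2) * lam := by
    have h1 : C₂ ≤ mv / (2 * (Ku + 1)) := min_le_right _ _
    have h2 : Ku * ‖w‖ ≤ Ku * (C₂ * lam) :=
      mul_le_mul_of_nonneg_left hwC hKu.le
    have h3 : Ku * C₂ ≤ mv / 2 := by
      calc Ku * C₂ ≤ Ku * (mv / (2 * (Ku + 1))) := mul_le_mul_of_nonneg_left h1 hKu.le
        _ ≤ mv / 2 := by
            rw [← mul_div_assoc, div_le_div_iff₀ (by positivity) (by norm_num)]
            nlinarith [hmv0, hKu]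
    nlinarith [hlam]
  have hqlam : ∀ i, |q i| ≤ (ε / 2) * lam := by
    intro i
    have h1 : C₂ ≤ ε / (2 * (Kq + 1)) := min_le_left _ _
    have h3 : Kq * C₂ ≤ ε / 2 := by
      calc Kq * C₂ ≤ Kq * (ε / (2 * (Kq + 1))) := mul_le_mul_of_nonneg_left h1 hKq.le
        _ ≤ ε / 2 := by
            rw [← mul_div_assoc, div_le_div_iff₀ (by positivity) (by norm_num)]
            nlinarith [hε0, hKq]
    have h2 : Kq * ‖w‖ ≤ Kq * (C₂ * lam) := mul_le_mul_of_nonneg_left hwC hKq.le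
    have := hqc i
    nlinarith [hlam]
  -- support facts
  have ha₀J : ∀ i, i ∉ J → a₀ i = 0 := by
    intro i hi
    by_contra h
    exact hi (hIJ (by rw [hI]; exact h))
  have hsupp_ahat : ∀ i, i ∉ J → ahat i = 0 := by
    intro i hi
    rw [hahat_co i, ha₀J i hi, hu_supp i hi, hv_supp i hi]
    ring
  -- positivity on J
  have hIbound : ∀ i ∈ I, |u i - lam * v i| < |a₀ i| := by
    intro i hi
    have h1 : |u i - lam * v i| ≤ Ku * ‖w‖ + lam * ‖v‖ := by
      calc |u i - lam * v i| ≤ |u i| + |lam * v i| := abs_sub _ _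
        _ ≤ Ku * ‖w‖ + lam * ‖v‖ := by
            have := coord_le_norm v i
            have h2 := huc i
            rw [abs_mul, abs_of_pos hlam]
            nlinarith [hlam]
    have h2 : Ku * ‖w‖ ≤ Ku * (C₂ * lam) := by
      apply mul_le_mul_of_nonneg_left hwC hKu.le
    have h3 : lam ≤ C₁ * |a₀ i| := hlamI i hi
    have ha : (0:ℝ) < |a₀ i| := abs_pos.mpr (by rw [hI] at hi; exact hi)
    have hC₁e : C₁ * (C₂ * Ku + ‖v‖ + 1) = 1/2 := by
      rw [hC₁def, div_mul_eq_mul_div, one_mul, div_eq_div_iff (by positivity) (by norm_num)]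
      ring
    nlinarith [hlam, norm_nonneg v, hC₁]
  have hpos : ∀ i ∈ J, 0 < η₀ i * ahat i := by
    intro i hi
    have hei : |η₀ i| = 1 := by rw [hJ] at hi; exact hi
    by_cases hiI : i ∈ I
    · have hs : η₀ i = Real.sign (a₀ i) := by rw [hη₀]; exact hp₀_feas.2 i hiI
      have ha0 : a₀ i ≠ 0 := by rw [hI] at hiI; exact hiI
      have h1 : η₀ i * a₀ i = |a₀ i| := by rw [hs]; exact sign_mul_self_eq_abs ha0
      have h2 : η₀ i * (u i - lam * v i) ≥ -|u i - lam * v i| := by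
        have := abs_mul (η₀ i) (u i - lam * v i)
        have h3 := neg_abs_le (η₀ i * (u i - lam * v i))
        rw [this, hei, one_mul] at h3
        linarith
      have h4 : η₀ i * ahat i = η₀ i * a₀ i + η₀ i * (u i - lam * v i) := by
        rw [hahat_co i]; ring
      have := hIbound i hiI
      rw [h4, h1]
      linarith
    · have ha0 : a₀ i = 0 := by
        by_contra h
        exact hiI (by rw [hI]; exact h)
      have hvi : v i ≠ 0 := hv_ne i hi hiI
      have hneg : η₀ i * v i < 0 := by
        rcases lt_or_eq_of_le (hsign i hi hiI) with h | h
        · exact h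
        · exfalso
          have : η₀ i ≠ 0 := by
            intro h0
            rw [h0] at hei
            simp at hei
          exact (mul_ne_zero this hvi) h
      have h1 : -(lam * (η₀ i * v i)) = lam * |v i| := by
        have : |η₀ i * v i| = |v i| := by rw [abs_mul, hei, one_mul]
        rw [abs_of_neg hneg] at this
        rw [← this]; ring
      have h2 : η₀ i * u i ≥ -|u i| := by
        have h3 := neg_abs_le (η₀ i * u i)
        rw [abs_mul, hei, one_mul] at h3
        linarith
      have h4 : η₀ i * ahat i = η₀ i * u i - lam * (η₀ i * v i) := by
        rw [hahat_co i, ha0]; ring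
      have h5 : |u i| < lam * mv := by
        have := huc i
        nlinarith [hKuw, hmv0, hlam]
      have h6 : mv ≤ |v i| := hmv i hi hiI
      rw [h4]
      nlinarith [hlam]
  -- certificate bounds for η
  have hηJ : ∀ i ∈ J, η i = lam * η₀ i := by
    intro i hi
    rw [hηco i, hqJ i hi, zero_add]
  have hηb : ∀ i, |η i| ≤ lam := by
    intro i
    by_cases hi : i ∈ J
    · rw [hηJ i hi, abs_mul, abs_of_pos hlam, (by rw [hJ] at hi; exact hi : |η₀ i| = 1), mul_one]
    · rw [hηco i]
      have h1 := hqlam i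
      have h2 : |lam * η₀ i| ≤ lam * (1 - ε) := by
        rw [abs_mul, abs_of_pos hlam]
        exact mul_le_mul_of_nonneg_left (hεoff i hi) hlam.le
      calc |q i + lam * η₀ i| ≤ |q i| + |lam * η₀ i| := abs_add_le _ _
        _ ≤ (ε/2) * lam + lam * (1 - ε) := add_le_add h1 h2
        _ ≤ lam := by nlinarith [hε0, hlam]
  have hηstrict : ∀ i, i ∉ J → |η i| < lam := by
    intro i hi
    rw [hηco i]
    have h1 := hqlam i
    have h2 : |lam * η₀ i| ≤ lam * (1 - ε) := by
      rw [abs_mul, abs_of_pos hlam]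
      exact mul_le_mul_of_nonneg_left (hεoff i hi) hlam.le
    calc |q i + lam * η₀ i| ≤ |q i| + |lam * η₀ i| := abs_add_le _ _
      _ ≤ (ε/2) * lam + lam * (1 - ε) := add_le_add h1 h2
      _ < lam := by nlinarith [hε0, hlam]
  have hηs : ∀ i, η i * ahat i = lam * |ahat i| := by
    intro i
    by_cases hi : i ∈ J
    · have hei : |η₀ i| = 1 := by rw [hJ] at hi; exact hi
      rw [hηJ i hi]
      have h1 : η₀ i * ahat i = |ahat i| := by
        have h2 : |η₀ i * ahat i| = |ahat i| := by rw [abs_mul, hei, one_mul]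
        rw [← h2]
        exact (abs_of_pos (hpos i hi)).symm
      rw [mul_assoc, h1]
    · rw [hsupp_ahat i hi, mul_zero, abs_zero, mul_zero]
  have hsum : ∑ i, η i * ahat i = lam * ∑ i, |ahat i| := by
    rw [Finset.mul_sum]
    exact Finset.sum_congr rfl (fun i _ => hηs i)
  -- conclusion
  refine ⟨ahat, ?_, ?_, ?_, ?_⟩
  · -- minimality
    intro a
    have hexp := lasso_expand Op y lam ahat a η hη
    rw [hexp]
    have hT2 : 0 ≤ ∑ i, (lam * |a i| - η i * a i) := by
      apply Finset.sum_nonneg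
      intro i _
      have h1 : η i * a i ≤ |η i| * |a i| := by
        calc η i * a i ≤ |η i * a i| := le_abs_self _
          _ = |η i| * |a i| := abs_mul _ _
      have h2 : |η i| * |a i| ≤ lam * |a i| :=
        mul_le_mul_of_nonneg_right (hηb i) (abs_nonneg _)
      linarith
    have hT3 : (∑ i, η i * ahat i) - lam * ∑ i, |ahat i| = 0 := by
      rw [hsum]; ring
    have hT1 : (0:ℝ) ≤ (1/2) * ‖Op (a - ahat)‖^2 := by positivity
    linarith
  · -- uniqueness
    intro a' ha'
    have hexp := lasso_expand Op y lam ahat a' η hη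
    have hmin' := ha' ahat
    have hT3 : (∑ i, η i * ahat i) - lam * ∑ i, |ahat i| = 0 := by
      rw [hsum]; ring
    have hT2nn : ∀ i ∈ Finset.univ, 0 ≤ lam * |a' i| - η i * a' i := by
      intro i _
      have h1 : η i * a' i ≤ |η i| * |a' i| := by
        calc η i * a' i ≤ |η i * a' i| := le_abs_self _
          _ = |η i| * |a' i| := abs_mul _ _
      have h2 : |η i| * |a' i| ≤ lam * |a' i| :=
        mul_le_mul_of_nonneg_right (hηb i) (abs_nonneg _)
      linarith
    have hT2 : 0 ≤ ∑ i, (lam * |a' i| - η i * a' i) :=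
      Finset.sum_nonneg hT2nn
    have hT1 : (0:ℝ) ≤ (1/2) * ‖Op (a' - ahat)‖^2 := by positivity
    have hzero : (1/2) * ‖Op (a' - ahat)‖^2 = 0 ∧
        ∑ i, (lam * |a' i| - η i * a' i) = 0 := by
      constructor <;> linarith
    have hterm : ∀ i ∈ Finset.univ, lam * |a' i| - η i * a' i = 0 :=
      (Finset.sum_eq_zero_iff_of_nonneg hT2nn).mp hzero.2
    have ha'J : ∀ i, i ∉ J → a' i = 0 := by
      intro i hi
      by_contra h
      have h1 := hterm i (Finset.mem_univ i)
      have h2 : η i * a' i ≤ |η i| * |a' i| := by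
        calc η i * a' i ≤ |η i * a' i| := le_abs_self _
          _ = |η i| * |a' i| := abs_mul _ _
      have h3 : |η i| * |a' i| < lam * |a' i| :=
        mul_lt_mul_of_pos_right (hηstrict i hi) (abs_pos.mpr h)
      linarith
    have hOpd : Op (a' - ahat) = 0 := by
      have h1 : ‖Op (a' - ahat)‖^2 = 0 := by linarith [hzero.1]
      have h2 : ‖Op (a' - ahat)‖ = 0 := by
        have := sq_eq_zero_iff.mp h1
        exact this
      exact norm_eq_zero.mp h2
    have hd : a' - ahat = 0 := by
      apply hfullrank
      · intro i hi
        simp only [PiLp.sub_apply]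
        rw [ha'J i hi, hsupp_ahat i hi]
        ring
      · exact hOpd
    exact sub_eq_zero.mp hd
  · -- support
    ext i
    simp only [Set.mem_setOf_eq]
    constructor
    · intro h
      by_contra hi
      exact h (hsupp_ahat i hi)
    · intro hi
      intro h
      have := hpos i hi
      rw [h, mul_zero] at this
      exact lt_irrefl 0 this
  · -- normal equations
    intro j hj
    have he : ahat - a₀ + lam • v = u := by rw [hahat]; abel
    rw [he]
    exact hu_eq j hj
end
end

section
/- Exact support recovery at low noise for the abstract cone-constrained lasso (Fuchs-type result for C-BP): Let (a₀,b₀) ∈ C_h^P ∖ {0}, write I↑ = I↑(a₀,b₀), I↓ = I↓(a₀,b₀), and assume Ā = ((A+(h/2)B)_{I↑}, (A−(h/2)B)_{I↓}) has full rank. Assume moreover that the Fuchs-type pre-certificate q_F = Ā(Ā^*Ā)^{-1}𝟙 satisfies ((A+(h/2)B)^* q_F)_k < 1 for all k ∉ I↑ and ((A−(h/2)B)^* q_F)_k < 1 for all k ∉ I↓. Set T = min of the set {a₀_i + (2/h) b₀_i : i ∈ I↑} ∪ {a₀_i − (2/h) b₀_i : i ∈ I↓}. Then there exist constants C¹ >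 0, C² > 0 such that for all λ with 0 < λ ≤ C¹ T and all w ∈ H with ‖w‖ < C² λ, the solution (a_λ,b_λ) of Q_λ(A a₀ + B b₀ + w) is unique, satisfies I↑(a_λ,b_λ) = I↑ and I↓(a_λ,b_λ) = I↓, and equals (a_λ, b_λ) = (a₀, b₀) + H_h(Ā^+ w) − λ H_h((Ā^*Ā)^{-1}𝟙), where Ā^+ = (Ā^*Ā)^{-1}Ā^* and the vectors indexed by I↑ and I↓ are extended by zero before applying H_h. -/
/-!
Writing `a = u + v`, `b = (h/2)(u - v)` (the map `H_h`) turns the cone `C_h^P` into the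
nonnegative orthant and `Q_λ` into a nonnegative lasso whose dictionary consists of the columns of
`A + (h/2)B` and `A - (h/2)B`, since `‖a‖₁ = ∑ (uᵢ + vᵢ)` on the cone. For a nonnegative lasso, `x`
is the unique minimizer as soon as the correlations `⟪φᵢ, y - Φx⟫` equal `λ` on the support of `x`
and are `< λ` off it, and the columns on the support are independent. The candidate
`x₀ + Ā⁺w - λ(Ā^*Ā)⁻¹𝟙` has residual `(w - Pw) + λ q_F`, with `P` the orthogonal projection onto the
span of the support columns: its correlations are exactly `λ` on the support and at most
`λ⟪φᵢ, q_F⟫ + ‖φᵢ‖‖w‖ < λ` off it when `‖w‖ ≪ λ`, and its coordinates on the support stay positive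
when `λ ≪ T`.
-/

noncomputable section

open scoped InnerProductSpace RealInnerProductSpace
open Filter Topology

lemma exists_pos_forall_add_le_of_forall_lt {ι : Type*} [Finite ι] {p : ι → Prop}
    {f g : ι → ℝ} (hfg : ∀ i, p i → f i < g i) : ∃ δ > 0, ∀ i, p i → f i + δ ≤ g i := by
  have hev : ∀ᶠ δ in 𝓝[>] (0 : ℝ), 0 < δ ∧ ∀ i, p i → f i + δ ≤ g i := by
    refine eventually_mem_nhdsWithin.and (eventually_all.2 fun i => ?_)
    by_cases hi : p i
    · filter_upwards [nhdsWithin_le_nhds (eventually_lt_nhds (sub_pos.2 (hfg i hi)))]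
        with δ hδ _
      linarith
    · exact .of_forall fun _ h => absurd h hi
  obtain ⟨δ, hδ, hδfg⟩ := hev.exists
  exact ⟨δ, hδ, hδfg⟩

lemma setOf_pos_eq {α : Type*} {S : Set α} {f : α → ℝ} (hpos : ∀ s ∈ S, 0 < f s)
    (hzero : ∀ s ∉ S, f s = 0) : {s | 0 < f s} = S := by
  ext s
  by_cases hs : s ∈ S <;> simp [hs, hpos s, hzero s]

lemma Sum.inl_mem_image_union_iff {α β : Type*} {I : Set α} {J : Set β} {i : α} :
    Sum.inl i ∈ Sum.inl '' I ∪ Sum.inr '' J ↔ i ∈ I := by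
  simp

lemma Sum.inr_mem_image_union_iff {α β : Type*} {I : Set α} {J : Set β} {j : β} :
    Sum.inr j ∈ Sum.inl '' I ∪ Sum.inr '' J ↔ j ∈ J := by
  simp

def supportedOn {ι : Type*} (S : Set ι) : Submodule ℝ (ι → ℝ) := Submodule.pi Sᶜ fun _ => ⊥

lemma mem_supportedOn {ι : Type*} {S : Set ι} {x : ι → ℝ} :
    x ∈ supportedOn S ↔ ∀ i ∉ S, x i = 0 := by
  simp [supportedOn, Submodule.mem_pi]

section NonnegLasso

variable {ι H : Type*} [Fintype ι] [NormedAddCommGroup H] [InnerProductSpace ℝ H]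

def nnLassoObjective (φ : ι → H) (y : H) (lam : ℝ) (x : ι → ℝ) : ℝ :=
  (1 / 2) * ‖y - Fintype.linearCombination ℝ φ x‖ ^ 2 + lam * ∑ i, x i

def IsNNLassoMinimizer (φ : ι → H) (y : H) (lam : ℝ) (x : ι → ℝ) : Prop :=
  0 ≤ x ∧ ∀ x', 0 ≤ x' → nnLassoObjective φ y lam x ≤ nnLassoObjective φ y lam x'

lemma inner_linearCombination (φ : ι → H) (r : H) (x : ι → ℝ) :
    ⟪r, Fintype.linearCombination ℝ φ x⟫ = ∑ i, x i * ⟪φ i, r⟫ := by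
  simp [Fintype.linearCombination_apply, inner_sum, real_inner_smul_right, real_inner_comm]

lemma nnLassoObjective_eq_add (φ : ι → H) (y : H) (lam : ℝ) (x x' : ι → ℝ) :
    nnLassoObjective φ y lam x' = nnLassoObjective φ y lam x +
      (1 / 2) * ‖Fintype.linearCombination ℝ φ (x' - x)‖ ^ 2 +
      ∑ i, (lam - ⟪φ i, y - Fintype.linearCombination ℝ φ x⟫) * (x' i - x i) := by
  have hres : y - Fintype.linearCombination ℝ φ x' =
      (y - Fintype.linearCombination ℝ φ x) - Fintype.linearCombination ℝ φ (x' - x) := by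
    rw [map_sub]; abel
  have hgap : ∑ i, (lam - ⟪φ i, y - Fintype.linearCombination ℝ φ x⟫) * (x' i - x i) =
      lam * ∑ i, x' i - lam * ∑ i, x i -
        ∑ i, (x' - x) i * ⟪φ i, y - Fintype.linearCombination ℝ φ x⟫ := by
    simp only [Finset.mul_sum, ← Finset.sum_sub_distrib, Pi.sub_apply]
    exact Finset.sum_congr rfl fun i _ => by ring
  rw [nnLassoObjective, nnLassoObjective, hres, norm_sub_sq_real, inner_linearCombination, hgap]
  ring

variable {φ : ι → H} {y : H} {lam : ℝ} {S : Set ι} {x : ι → ℝ}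

lemma certificate_gap_mul_sub_eq (hxS : ∀ i ∉ S, x i = 0)
    (hon : ∀ i ∈ S, ⟪φ i, y - Fintype.linearCombination ℝ φ x⟫ = lam) (x' : ι → ℝ) (i : ι) :
    (lam - ⟪φ i, y - Fintype.linearCombination ℝ φ x⟫) * (x' i - x i) =
      (lam - ⟪φ i, y - Fintype.linearCombination ℝ φ x⟫) * x' i := by
  by_cases hi : i ∈ S
  · simp [hon i hi]
  · simp [hxS i hi]

theorem isNNLassoMinimizer_of_certificate (hx : 0 ≤ x) (hxS : ∀ i ∉ S, x i = 0)
    (hon : ∀ i ∈ S, ⟪φ i, y - Fintype.linearCombination ℝ φ x⟫ = lam)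
    (hoff : ∀ i ∉ S, ⟪φ i, y - Fintype.linearCombination ℝ φ x⟫ ≤ lam) :
    IsNNLassoMinimizer φ y lam x := by
  refine ⟨hx, fun x' hx' => ?_⟩
  have hgap : 0 ≤ ∑ i, (lam - ⟪φ i, y - Fintype.linearCombination ℝ φ x⟫) * x' i := by
    refine Finset.sum_nonneg fun i _ => mul_nonneg ?_ (hx' i)
    by_cases hi : i ∈ S
    · simp [hon i hi]
    · linarith [hoff i hi]
  rw [nnLassoObjective_eq_add φ y lam x x']
  simp only [certificate_gap_mul_sub_eq hxS hon x']
  nlinarith [sq_nonneg ‖Fintype.linearCombination ℝ φ (x' - x)‖]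

theorem eq_of_isNNLassoMinimizer_of_certificate
    (hinj : ∀ x : ι → ℝ, (∀ i ∉ S, x i = 0) → Fintype.linearCombination ℝ φ x = 0 → x = 0)
    (hx : 0 ≤ x) (hxS : ∀ i ∉ S, x i = 0)
    (hon : ∀ i ∈ S, ⟪φ i, y - Fintype.linearCombination ℝ φ x⟫ = lam)
    (hoff : ∀ i ∉ S, ⟪φ i, y - Fintype.linearCombination ℝ φ x⟫ < lam)
    {x' : ι → ℝ} (hx' : IsNNLassoMinimizer φ y lam x') : x' = x := by
  set c := fun i => lam - ⟪φ i, y - Fintype.linearCombination ℝ φ x⟫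
  have hterm_nonneg : ∀ i, 0 ≤ c i * x' i := fun i => by
    refine mul_nonneg ?_ (hx'.1 i)
    by_cases hi : i ∈ S
    · simp [c, hon i hi]
    · linarith [hoff i hi]
  have hle := hx'.2 x hx
  rw [nnLassoObjective_eq_add φ y lam x x'] at hle
  simp only [certificate_gap_mul_sub_eq hxS hon x'] at hle
  have hgap : ∑ i, c i * x' i = 0 := by
    refine le_antisymm ?_ (Finset.sum_nonneg fun i _ => hterm_nonneg i)
    nlinarith [sq_nonneg ‖Fintype.linearCombination ℝ φ (x' - x)‖]
  have hnorm : Fintype.linearCombination ℝ φ (x' - x) = 0 := by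
    have := Finset.sum_nonneg fun i (_ : i ∈ Finset.univ) => hterm_nonneg i
    rw [← norm_eq_zero, ← pow_eq_zero_iff two_ne_zero]
    nlinarith [sq_nonneg ‖Fintype.linearCombination ℝ φ (x' - x)‖]
  have hx'S : ∀ i ∉ S, x' i = 0 := fun i hi => by
    have hci : 0 < c i := sub_pos.2 (hoff i hi)
    have := (Finset.sum_eq_zero_iff_of_nonneg fun i _ => hterm_nonneg i).1 hgap i
      (Finset.mem_univ i)
    exact (mul_eq_zero.1 this).resolve_left hci.ne'
  exact sub_eq_zero.1 (hinj _ (fun i hi => by simp [hx'S i hi, hxS i hi]) hnorm)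

lemma exists_abs_le_mul_norm_linearCombination
    (hinj : ∀ x : ι → ℝ, (∀ i ∉ S, x i = 0) → Fintype.linearCombination ℝ φ x = 0 → x = 0) :
    ∃ c > 0, ∀ x : ι → ℝ, (∀ i ∉ S, x i = 0) →
      ∀ i, |x i| ≤ c * ‖Fintype.linearCombination ℝ φ x‖ := by
  set L := (Fintype.linearCombination ℝ φ).domRestrict (supportedOn S)
  have hker : LinearMap.ker L = ⊥ := by
    refine LinearMap.ker_eq_bot'.2 fun x hx => Subtype.ext ?_
    exact hinj x (mem_supportedOn.1 x.2) hx
  obtain ⟨K, hKpos, hK⟩ := L.exists_antilipschitzWith hker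
  refine ⟨K, hKpos, fun x hx i => ?_⟩
  calc |x i| = ‖x i‖ := (Real.norm_eq_abs _).symm
    _ ≤ ‖(⟨x, mem_supportedOn.2 hx⟩ : supportedOn S)‖ := norm_le_pi_norm x i
    _ ≤ K * ‖Fintype.linearCombination ℝ φ x‖ := hK.le_mul_norm (map_zero L) _

lemma exists_supported_residual_orthogonal (φ : ι → H) (S : Set ι) (w : H) :
    ∃ ζ : ι → ℝ, (∀ i ∉ S, ζ i = 0) ∧
      (∀ i ∈ S, ⟪φ i, w - Fintype.linearCombination ℝ φ ζ⟫ = 0) ∧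
      ‖Fintype.linearCombination ℝ φ ζ‖ ≤ ‖w‖ ∧ ‖w - Fintype.linearCombination ℝ φ ζ‖ ≤ ‖w‖ := by
  classical
  set V := (supportedOn S).map (Fintype.linearCombination ℝ φ)
  obtain ⟨ζ, hζS, hζ⟩ := Submodule.mem_map.1 (V.starProjection_apply_mem w)
  refine ⟨ζ, mem_supportedOn.1 hζS, fun i hi => ?_, ?_, ?_⟩
  · have hφi : φ i ∈ V := Submodule.mem_map.2 ⟨Pi.single i 1,
      mem_supportedOn.2 fun j hj => Pi.single_eq_of_ne (by rintro rfl; exact hj hi) _,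
      by simp [Fintype.linearCombination_apply_single]⟩
    rw [hζ]
    exact Submodule.inner_right_of_mem_orthogonal hφi (V.sub_starProjection_mem_orthogonal w)
  · rw [hζ]; exact V.norm_starProjection_apply_le w
  · have : w - V.starProjection w = Vᗮ.starProjection w := by
      simp [Submodule.starProjection_orthogonal]
    rw [hζ, this]; exact Vᗮ.norm_starProjection_apply_le w

theorem exists_nnLasso_strict_certificate
    (hinj : ∀ x : ι → ℝ, (∀ i ∉ S, x i = 0) → Fintype.linearCombination ℝ φ x = 0 → x = 0)
    (z : ι → ℝ) (hz : ∀ i ∉ S, z i = 0)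
    (hq_on : ∀ i ∈ S, ⟪φ i, Fintype.linearCombination ℝ φ z⟫ = 1)
    (hq_off : ∀ i ∉ S, ⟪φ i, Fintype.linearCombination ℝ φ z⟫ < 1) :
    ∃ C₁ C₂ : ℝ, 0 < C₁ ∧ 0 < C₂ ∧ ∀ x₀ : ι → ℝ, (∀ i ∉ S, x₀ i = 0) →
      ∀ lam : ℝ, 0 < lam → (∀ i ∈ S, lam ≤ C₁ * x₀ i) → ∀ w : H, ‖w‖ < C₂ * lam →
      ∃ x : ι → ℝ, (∀ i ∈ S, 0 < x i) ∧ (∀ i ∉ S, x i = 0) ∧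
        (∀ i ∈ S, ⟪φ i, Fintype.linearCombination ℝ φ x₀ + w - Fintype.linearCombination ℝ φ x⟫
          = lam) ∧
        (∀ i ∉ S, ⟪φ i, Fintype.linearCombination ℝ φ x₀ + w - Fintype.linearCombination ℝ φ x⟫
          < lam) := by
  set L := Fintype.linearCombination ℝ φ
  obtain ⟨c, hc, hcoord⟩ := exists_abs_le_mul_norm_linearCombination hinj
  obtain ⟨δ, hδ, hmargin⟩ := exists_pos_forall_add_le_of_forall_lt hq_off
  set M := ∑ i, ‖φ i‖ + 1
  have hM : 0 < M := by positivity
  have hφM : ∀ i, ‖φ i‖ ≤ M := fun i => by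
    have := Finset.single_le_sum (fun j _ => norm_nonneg (φ j)) (Finset.mem_univ i)
    linarith
  set C₂ := δ / M
  set K := c * C₂ + ‖z‖ + 1
  have hK : 0 < K := by positivity
  refine ⟨K⁻¹, C₂, by positivity, by positivity, fun x₀ hx₀ lam hlam hT w hw => ?_⟩
  obtain ⟨ζ, hζS, hζ_on, hζ_le, hres_le⟩ := exists_supported_residual_orthogonal φ S w
  -- `x₀ + Ā⁺w - λ(Ā^*Ā)⁻¹𝟙`: `ζ` and `z` are the coefficients of `Pw` and of `q_F`
  refine ⟨x₀ + ζ - lam • z, fun i hi => ?_, fun i hi => by simp [hx₀ i hi, hζS i hi, hz i hi],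
    ?_⟩
  · have hζi : |ζ i| ≤ c * (C₂ * lam) :=
      (hcoord ζ hζS i).trans (by gcongr; exact hζ_le.trans hw.le)
    have hzi : |z i| ≤ ‖z‖ := by simpa using norm_le_pi_norm z i
    have hx₀i : K * lam ≤ x₀ i := (le_inv_mul_iff₀ hK).1 (hT i hi)
    have := abs_le.1 hζi
    have := abs_le.1 hzi
    simp only [Pi.add_apply, Pi.sub_apply, Pi.smul_apply, smul_eq_mul]
    nlinarith
  have hres : L x₀ + w - L (x₀ + ζ - lam • z) = (w - L ζ) + lam • L z := by
    simp only [map_add, map_sub, map_smul]; abel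
  simp only [hres, inner_add_right, real_inner_smul_right]
  refine ⟨fun i hi => by rw [hζ_on i hi, hq_on i hi]; ring, fun i hi => ?_⟩
  have hcorr : ⟪φ i, w - L ζ⟫ < δ * lam := by
    calc ⟪φ i, w - L ζ⟫ ≤ ‖φ i‖ * ‖w - L ζ‖ := real_inner_le_norm _ _
      _ ≤ M * ‖w‖ := by gcongr; exact hφM i
      _ < M * (C₂ * lam) := by gcongr
      _ = δ * lam := by rw [← mul_assoc, mul_div_cancel₀ _ hM.ne']
  nlinarith [hmargin i hi]

theorem exists_nnLasso_fuchs_solution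
    (hinj : ∀ x : ι → ℝ, (∀ i ∉ S, x i = 0) → Fintype.linearCombination ℝ φ x = 0 → x = 0)
    (z : ι → ℝ) (hz : ∀ i ∉ S, z i = 0)
    (hq_on : ∀ i ∈ S, ⟪φ i, Fintype.linearCombination ℝ φ z⟫ = 1)
    (hq_off : ∀ i ∉ S, ⟪φ i, Fintype.linearCombination ℝ φ z⟫ < 1) :
    ∃ C₁ C₂ : ℝ, 0 < C₁ ∧ 0 < C₂ ∧ ∀ x₀ : ι → ℝ, (∀ i ∉ S, x₀ i = 0) →
      ∀ lam : ℝ, 0 < lam → (∀ i ∈ S, lam ≤ C₁ * x₀ i) → ∀ w : H, ‖w‖ < C₂ * lam →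
      ∃ x : ι → ℝ, IsNNLassoMinimizer φ (Fintype.linearCombination ℝ φ x₀ + w) lam x ∧
        (∀ x', IsNNLassoMinimizer φ (Fintype.linearCombination ℝ φ x₀ + w) lam x' → x' = x) ∧
        (∀ i ∈ S, 0 < x i) ∧ (∀ i ∉ S, x i = 0) ∧
        (∀ i ∈ S, ⟪φ i, Fintype.linearCombination ℝ φ x₀ + w - Fintype.linearCombination ℝ φ x⟫
          = lam) := by
  obtain ⟨C₁, C₂, hC₁, hC₂, hcert⟩ := exists_nnLasso_strict_certificate hinj z hz hq_on hq_off
  refine ⟨C₁, C₂, hC₁, hC₂, fun x₀ hx₀ lam hlam hT w hw => ?_⟩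
  obtain ⟨x, hpos, hzero, hon, hoff⟩ := hcert x₀ hx₀ lam hlam hT w hw
  have hx : 0 ≤ x := fun i => by
    by_cases hi : i ∈ S
    exacts [(hpos i hi).le, (hzero i hi).ge]
  exact ⟨x, isNNLassoMinimizer_of_certificate hx hzero hon fun i hi => (hoff i hi).le,
    fun x' => eq_of_isNNLassoMinimizer_of_certificate hinj hx hzero hon hoff, hpos, hzero, hon⟩

end NonnegLasso

section ConeLasso

variable {κ : Type*}

/-- The paper's `H_h`, with a pair `(u, v)` of vectors of `ℝ^κ` stored as a function on `κ ⊕ κ`. -/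
def coneParam (h : ℝ) : (κ ⊕ κ → ℝ) →ₗ[ℝ] EuclideanSpace ℝ κ × EuclideanSpace ℝ κ where
  toFun x := (WithLp.toLp 2 fun i => x (.inl i) + x (.inr i),
    WithLp.toLp 2 fun i => h / 2 * (x (.inl i) - x (.inr i)))
  map_add' x y := by ext i <;> simp <;> ring
  map_smul' c x := by ext i <;> simp <;> ring

lemma coneParam_fst_apply (h : ℝ) (x : κ ⊕ κ → ℝ) (i : κ) :
    (coneParam h x).1 i = x (.inl i) + x (.inr i) := rfl

lemma coneParam_snd_apply (h : ℝ) (x : κ ⊕ κ → ℝ) (i : κ) :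
    (coneParam h x).2 i = h / 2 * (x (.inl i) - x (.inr i)) := rfl

lemma coneParam_apply (h : ℝ) (x : κ ⊕ κ → ℝ) :
    coneParam h x = ((WithLp.toLp 2 fun i => x (.inl i)) + WithLp.toLp 2 fun i => x (.inr i),
      (h / 2) • ((WithLp.toLp 2 fun i => x (.inl i)) - WithLp.toLp 2 fun i => x (.inr i))) := by
  ext i <;> simp [coneParam_fst_apply, coneParam_snd_apply]

def coneCoords (h : ℝ) (a b : EuclideanSpace ℝ κ) : κ ⊕ κ → ℝ :=
  Sum.elim (fun i => (a i + 2 / h * b i) / 2) (fun i => (a i - 2 / h * b i) / 2)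

variable {h : ℝ}

lemma coneParam_coneCoords (hh : h ≠ 0) (a b : EuclideanSpace ℝ κ) :
    coneParam h (coneCoords h a b) = (a, b) := by
  ext i
  · rw [coneParam_fst_apply, coneCoords, Sum.elim_inl, Sum.elim_inr]; ring
  · rw [coneParam_snd_apply, coneCoords, Sum.elim_inl, Sum.elim_inr]; field_simp; ring

lemma coneCoords_coneParam (hh : h ≠ 0) (x : κ ⊕ κ → ℝ) :
    coneCoords h (coneParam h x).1 (coneParam h x).2 = x := by
  ext (i | i) <;>
    simp only [coneCoords, Sum.elim_inl, Sum.elim_inr, coneParam_fst_apply, coneParam_snd_apply] <;>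
    field_simp <;> ring

lemma setOf_coneCoords_pos (a b : EuclideanSpace ℝ κ) :
    {s | 0 < coneCoords h a b s} =
      Sum.inl '' {i | 0 < a i + 2 / h * b i} ∪ Sum.inr '' {i | 0 < a i - 2 / h * b i} := by
  ext (i | i) <;> simp [coneCoords]

def InCone (h : ℝ) (a b : EuclideanSpace ℝ κ) : Prop := ∀ i, 0 ≤ a i ∧ |b i| ≤ (h / 2) * a i

lemma coneCoords_nonneg (hh : 0 < h) {a b : EuclideanSpace ℝ κ} (hab : InCone h a b) :
    0 ≤ coneCoords h a b := by
  have h2h : 2 / h * (h / 2) = 1 := by field_simp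
  rintro (i | i) <;> obtain ⟨-, hb⟩ := hab i <;> obtain ⟨hb₁, hb₂⟩ := abs_le.1 hb
  · have := mul_le_mul_of_nonneg_left hb₁ (by positivity : 0 ≤ 2 / h)
    simp only [coneCoords, Sum.elim_inl, Pi.zero_apply]
    nlinarith
  · have := mul_le_mul_of_nonneg_left hb₂ (by positivity : 0 ≤ 2 / h)
    simp only [coneCoords, Sum.elim_inr, Pi.zero_apply]
    nlinarith

lemma coneCoords_eq_zero_of_notMem (hh : 0 < h) {a b : EuclideanSpace ℝ κ} (hab : InCone h a b)
    {s : κ ⊕ κ} (hs : s ∉ Sum.inl '' {i | 0 < a i + 2 / h * b i} ∪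
      Sum.inr '' {i | 0 < a i - 2 / h * b i}) :
    coneCoords h a b s = 0 := by
  rw [← setOf_coneCoords_pos, Set.mem_ofPred_eq, not_lt] at hs
  exact le_antisymm hs (coneCoords_nonneg hh hab s)

lemma setOf_coneParam_pos (hh : h ≠ 0) {I J : Set κ} {x : κ ⊕ κ → ℝ}
    (hpos : ∀ s ∈ Sum.inl '' I ∪ Sum.inr '' J, 0 < x s)
    (hzero : ∀ s ∉ Sum.inl '' I ∪ Sum.inr '' J, x s = 0) :
    {i | 0 < (coneParam h x).1 i + 2 / h * (coneParam h x).2 i} = I ∧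
      {i | 0 < (coneParam h x).1 i - 2 / h * (coneParam h x).2 i} = J := by
  have hsupp := setOf_coneCoords_pos (h := h) (coneParam h x).1 (coneParam h x).2
  rw [coneCoords_coneParam hh, setOf_pos_eq hpos hzero] at hsupp
  exact ⟨Set.ext fun i => by simpa using (Set.ext_iff.1 hsupp (.inl i)).symm,
    Set.ext fun i => by simpa using (Set.ext_iff.1 hsupp (.inr i)).symm⟩

lemma exists_coneParam_eq_add (h : ℝ) {I J : Set κ} {x₀ x : κ ⊕ κ → ℝ}
    (hx₀ : ∀ s ∉ Sum.inl '' I ∪ Sum.inr '' J, x₀ s = 0)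
    (hx : ∀ s ∉ Sum.inl '' I ∪ Sum.inr '' J, x s = 0) :
    ∃ u v : EuclideanSpace ℝ κ, (∀ i, i ∉ I → u i = 0) ∧ (∀ i, i ∉ J → v i = 0) ∧
      (coneParam h x).1 = (coneParam h x₀).1 + u + v ∧
      (coneParam h x).2 = (coneParam h x₀).2 + (h / 2) • (u - v) := by
  have hsplit : coneParam h x = coneParam h x₀ + coneParam h (x - x₀) := by
    rw [← map_add, add_sub_cancel]
  refine ⟨WithLp.toLp 2 fun i => (x - x₀) (.inl i), WithLp.toLp 2 fun i => (x - x₀) (.inr i),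
    fun i hi => ?_, fun i hi => ?_, ?_, ?_⟩
  · have hi' := (Sum.inl_mem_image_union_iff (J := J)).not.2 hi
    simp [hx _ hi', hx₀ _ hi']
  · have hi' := (Sum.inr_mem_image_union_iff (I := I)).not.2 hi
    simp [hx _ hi', hx₀ _ hi']
  · rw [hsplit, coneParam_apply h (x - x₀), Prod.fst_add, add_assoc]
  · rw [hsplit, coneParam_apply h (x - x₀), Prod.snd_add]

lemma inCone_coneParam (hh : 0 ≤ h) {x : κ ⊕ κ → ℝ} (hx : 0 ≤ x) :
    InCone h (coneParam h x).1 (coneParam h x).2 := fun i => by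
  have hl : 0 ≤ x (.inl i) := hx _
  have hr : 0 ≤ x (.inr i) := hx _
  rw [coneParam_fst_apply, coneParam_snd_apply, abs_mul, abs_of_nonneg (by positivity)]
  exact ⟨by positivity, by gcongr; exact abs_le.2 ⟨by linarith, by linarith⟩⟩

lemma sum_abs_coneParam_fst [Fintype κ] {x : κ ⊕ κ → ℝ} (hx : 0 ≤ x) :
    ∑ i, |(coneParam h x).1 i| = ∑ j, x j := by
  rw [Fintype.sum_sum_type, ← Finset.sum_add_distrib]
  refine Finset.sum_congr rfl fun i _ => ?_
  rw [coneParam_fst_apply, abs_of_nonneg (add_nonneg (hx _) (hx _))]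

variable [Fintype κ] [DecidableEq κ] {H : Type*} [NormedAddCommGroup H] [InnerProductSpace ℝ H]

/-- The columns of `Ā`: those of `A + (h/2)B` on the left copy of `κ`, of `A - (h/2)B` on the
right one. -/
def coneDictionary (A B : EuclideanSpace ℝ κ →L[ℝ] H) (h : ℝ) : κ ⊕ κ → H :=
  Sum.elim (fun i => (A + (h / 2) • B) (EuclideanSpace.single i 1))
    (fun i => (A - (h / 2) • B) (EuclideanSpace.single i 1))

lemma map_toLp_eq_sum_single (T : EuclideanSpace ℝ κ →L[ℝ] H) (f : κ → ℝ) :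
    T (WithLp.toLp 2 f) = ∑ i, f i • T (EuclideanSpace.single i 1) := by
  conv_lhs => rw [← (EuclideanSpace.basisFun κ ℝ).sum_repr (WithLp.toLp 2 f)]
  simp [map_sum, map_smul]

lemma linearCombination_coneDictionary (A B : EuclideanSpace ℝ κ →L[ℝ] H) (h : ℝ)
    (x : κ ⊕ κ → ℝ) :
    Fintype.linearCombination ℝ (coneDictionary A B h) x =
      (A + (h / 2) • B) (WithLp.toLp 2 fun i => x (.inl i)) +
        (A - (h / 2) • B) (WithLp.toLp 2 fun i => x (.inr i)) := by
  rw [Fintype.linearCombination_apply, Fintype.sum_sum_type, map_toLp_eq_sum_single,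
    map_toLp_eq_sum_single]
  rfl

lemma linearCombination_coneDictionary_eq_coneParam (A B : EuclideanSpace ℝ κ →L[ℝ] H)
    (h : ℝ) (x : κ ⊕ κ → ℝ) :
    Fintype.linearCombination ℝ (coneDictionary A B h) x =
      A (coneParam h x).1 + B (coneParam h x).2 := by
  rw [linearCombination_coneDictionary, coneParam_apply]
  simp only [map_add, map_sub, map_smul, add_apply, sub_apply, smul_apply]
  module

lemma linearCombination_coneDictionary_injOn {A B : EuclideanSpace ℝ κ →L[ℝ] H}
    {Iup Idn : Set κ} (hfullrank : ∀ u v : EuclideanSpace ℝ κ,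
      (∀ i, i ∉ Iup → u i = 0) → (∀ i, i ∉ Idn → v i = 0) →
      (A + (h / 2) • B) u + (A - (h / 2) • B) v = 0 → u = 0 ∧ v = 0)
    (x : κ ⊕ κ → ℝ) (hx : ∀ s ∉ Sum.inl '' Iup ∪ Sum.inr '' Idn, x s = 0)
    (hx0 : Fintype.linearCombination ℝ (coneDictionary A B h) x = 0) : x = 0 := by
  rw [linearCombination_coneDictionary] at hx0
  obtain ⟨hu, hv⟩ := hfullrank _ _ (fun i hi => hx (.inl i) (Sum.inl_mem_image_union_iff.not.2 hi))
    (fun i hi => hx (.inr i) (Sum.inr_mem_image_union_iff.not.2 hi)) hx0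
  ext (i | i)
  · simpa using congrArg (fun v : EuclideanSpace ℝ κ => v i) hu
  · simpa using congrArg (fun v : EuclideanSpace ℝ κ => v i) hv

lemma inner_coneDictionary_inl [CompleteSpace H] (A B : EuclideanSpace ℝ κ →L[ℝ] H) (h : ℝ)
    (q : H) (i : κ) :
    ⟪coneDictionary A B h (.inl i), q⟫ = (ContinuousLinearMap.adjoint (A + (h / 2) • B)) q i := by
  rw [coneDictionary, Sum.elim_inl, ← ContinuousLinearMap.adjoint_inner_right,
    EuclideanSpace.inner_single_left]
  simp

lemma inner_coneDictionary_inr [CompleteSpace H] (A B : EuclideanSpace ℝ κ →L[ℝ] H) (h : ℝ)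
    (q : H) (i : κ) :
    ⟪coneDictionary A B h (.inr i), q⟫ = (ContinuousLinearMap.adjoint (A - (h / 2) • B)) q i := by
  rw [coneDictionary, Sum.elim_inr, ← ContinuousLinearMap.adjoint_inner_right,
    EuclideanSpace.inner_single_left]
  simp

lemma coneParam_residual (A B : EuclideanSpace ℝ κ →L[ℝ] H) (h : ℝ) (a b : EuclideanSpace ℝ κ)
    (w : H) (x : κ ⊕ κ → ℝ) :
    A ((coneParam h x).1 - a) + B ((coneParam h x).2 - b) - w =
      -(A a + B b + w - Fintype.linearCombination ℝ (coneDictionary A B h) x) := by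
  rw [linearCombination_coneDictionary_eq_coneParam, map_sub, map_sub]
  abel

lemma exists_coneDictionary_preCertificate [CompleteSpace H] {A B : EuclideanSpace ℝ κ →L[ℝ] H}
    {Iup Idn : Set κ} {qF : H} {u₀ v₀ : EuclideanSpace ℝ κ}
    (hu₀ : ∀ i, i ∉ Iup → u₀ i = 0) (hv₀ : ∀ i, i ∉ Idn → v₀ i = 0)
    (hqF : qF = (A + (h / 2) • B) u₀ + (A - (h / 2) • B) v₀)
    (hgram_up : ∀ i ∈ Iup, (ContinuousLinearMap.adjoint (A + (h / 2) • B)) qF i = 1)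
    (hgram_dn : ∀ i ∈ Idn, (ContinuousLinearMap.adjoint (A - (h / 2) • B)) qF i = 1)
    (hup : ∀ k, k ∉ Iup → (ContinuousLinearMap.adjoint (A + (h / 2) • B)) qF k < 1)
    (hdn : ∀ k, k ∉ Idn → (ContinuousLinearMap.adjoint (A - (h / 2) • B)) qF k < 1) :
    ∃ z : κ ⊕ κ → ℝ, (∀ s ∉ Sum.inl '' Iup ∪ Sum.inr '' Idn, z s = 0) ∧
      (∀ s ∈ Sum.inl '' Iup ∪ Sum.inr '' Idn,
        ⟪coneDictionary A B h s, Fintype.linearCombination ℝ (coneDictionary A B h) z⟫ = 1) ∧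
      (∀ s ∉ Sum.inl '' Iup ∪ Sum.inr '' Idn,
        ⟪coneDictionary A B h s, Fintype.linearCombination ℝ (coneDictionary A B h) z⟫ < 1) := by
  have hz : Fintype.linearCombination ℝ (coneDictionary A B h)
      (Sum.elim (fun i => u₀ i) fun i => v₀ i) = qF := by
    rw [linearCombination_coneDictionary, hqF]
    rfl
  refine ⟨Sum.elim (fun i => u₀ i) fun i => v₀ i, ?_, ?_, ?_⟩ <;> rintro (i | i) hs <;>
    simp only [hz, inner_coneDictionary_inl, inner_coneDictionary_inr, Sum.elim_inl,
      Sum.elim_inr] <;>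
    simp only [Sum.inl_mem_image_union_iff, Sum.inr_mem_image_union_iff] at hs
  exacts [hu₀ i hs, hv₀ i hs, hgram_up i hs, hgram_dn i hs, hup i hs, hdn i hs]

def coneLassoObjective (A B : EuclideanSpace ℝ κ →L[ℝ] H) (y : H) (lam : ℝ)
    (a b : EuclideanSpace ℝ κ) : ℝ :=
  (1 / 2) * ‖y - A a - B b‖ ^ 2 + lam * ∑ i, |a i|

lemma coneLassoObjective_coneParam (A B : EuclideanSpace ℝ κ →L[ℝ] H) (y : H) (lam : ℝ)
    {x : κ ⊕ κ → ℝ} (hx : 0 ≤ x) :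
    coneLassoObjective A B y lam (coneParam h x).1 (coneParam h x).2 =
      nnLassoObjective (coneDictionary A B h) y lam x := by
  rw [coneLassoObjective, nnLassoObjective, sum_abs_coneParam_fst hx,
    linearCombination_coneDictionary_eq_coneParam, sub_sub]

variable {A B : EuclideanSpace ℝ κ →L[ℝ] H} {y : H} {lam : ℝ} {x : κ ⊕ κ → ℝ}

lemma coneLassoObjective_eq (hh : h ≠ 0) (a b : EuclideanSpace ℝ κ) (hab : 0 ≤ coneCoords h a b) :
    coneLassoObjective A B y lam a b =
      nnLassoObjective (coneDictionary A B h) y lam (coneCoords h a b) := by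
  rw [← coneLassoObjective_coneParam A B y lam hab, coneParam_coneCoords hh]

theorem coneLasso_isUniqueMin_of_nnLasso (hh : 0 < h)
    (hx : IsNNLassoMinimizer (coneDictionary A B h) y lam x)
    (huniq : ∀ x', IsNNLassoMinimizer (coneDictionary A B h) y lam x' → x' = x) :
    (InCone h (coneParam h x).1 (coneParam h x).2 ∧ ∀ a b, InCone h a b →
      coneLassoObjective A B y lam (coneParam h x).1 (coneParam h x).2 ≤
        coneLassoObjective A B y lam a b) ∧
    ∀ a b, InCone h a b → (∀ a' b', InCone h a' b' →
      coneLassoObjective A B y lam a b ≤ coneLassoObjective A B y lam a' b') →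
      a = (coneParam h x).1 ∧ b = (coneParam h x).2 := by
  refine ⟨⟨inCone_coneParam hh.le hx.1, fun a b hab => ?_⟩, fun a b hab hmin => ?_⟩
  · have hab' := coneCoords_nonneg hh hab
    rw [coneLassoObjective_coneParam A B y lam hx.1, coneLassoObjective_eq hh.ne' a b hab']
    exact hx.2 _ hab'
  · have hab' := coneCoords_nonneg hh hab
    have hmin' : IsNNLassoMinimizer (coneDictionary A B h) y lam (coneCoords h a b) := by
      refine ⟨hab', fun x' hx' => ?_⟩
      rw [← coneLassoObjective_eq hh.ne' a b hab', ← coneLassoObjective_coneParam A B y lam hx']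
      exact hmin _ _ (inCone_coneParam hh.le hx')
    rw [← huniq _ hmin', coneParam_coneCoords hh.ne']
    exact ⟨rfl, rfl⟩

end ConeLasso

theorem cbp_fuchs_low_noise_support_recovery_general
    {H : Type*} [NormedAddCommGroup H] [InnerProductSpace ℝ H] [CompleteSpace H]
    {P : ℕ} (A B : EuclideanSpace ℝ (Fin P) →L[ℝ] H)
    (h : ℝ) (hh : 0 < h)
    (a₀ b₀ : EuclideanSpace ℝ (Fin P))
    (hcone₀ : ∀ i, 0 ≤ a₀ i ∧ |b₀ i| ≤ (h/2) * a₀ i)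
    (Iup Idn : Set (Fin P))
    (hIup : Iup = {i : Fin P | 0 < a₀ i + (2/h) * b₀ i})
    (hIdn : Idn = {i : Fin P | 0 < a₀ i - (2/h) * b₀ i})
    -- Ā = ((A+(h/2)B)_{I↑}, (A−(h/2)B)_{I↓}) has full rank
    (hfullrank : ∀ u v : EuclideanSpace ℝ (Fin P),
      (∀ i, i ∉ Iup → u i = 0) → (∀ i, i ∉ Idn → v i = 0) →
      (A + (h/2) • B) u + (A - (h/2) • B) v = 0 → u = 0 ∧ v = 0)
    -- the Fuchs pre-certificate q_F = Ā(Ā^*Ā)⁻¹𝟙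
    (qF : H) (u₀ v₀ : EuclideanSpace ℝ (Fin P))
    (hu₀ : ∀ i, i ∉ Iup → u₀ i = 0) (hv₀ : ∀ i, i ∉ Idn → v₀ i = 0)
    (hqF : qF = (A + (h/2) • B) u₀ + (A - (h/2) • B) v₀)
    (hqF_gram : (∀ i ∈ Iup, (ContinuousLinearMap.adjoint (A + (h/2) • B)) qF i = 1) ∧
      (∀ i ∈ Idn, (ContinuousLinearMap.adjoint (A - (h/2) • B)) qF i = 1))
    -- the strict pre-certificate conditions
    (hqF_up : ∀ k, k ∉ Iup → (ContinuousLinearMap.adjoint (A + (h/2) • B)) qF k < 1)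
    (hqF_dn : ∀ k, k ∉ Idn → (ContinuousLinearMap.adjoint (A - (h/2) • B)) qF k < 1) :
    ∃ C₁ C₂ : ℝ, 0 < C₁ ∧ 0 < C₂ ∧
      ∀ lam : ℝ, 0 < lam →
      (∀ i ∈ Iup, lam ≤ C₁ * (a₀ i + (2/h) * b₀ i)) →
      (∀ i ∈ Idn, lam ≤ C₁ * (a₀ i - (2/h) * b₀ i)) →
      ∀ w : H, ‖w‖ < C₂ * lam →
      ∃ alam blam : EuclideanSpace ℝ (Fin P),
        -- (a_λ, b_λ) is a solution of Q_λ(A a₀ + B b₀ + w) …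
        ((∀ i, 0 ≤ alam i ∧ |blam i| ≤ (h/2) * alam i) ∧
          ∀ a b : EuclideanSpace ℝ (Fin P),
            (∀ i, 0 ≤ a i ∧ |b i| ≤ (h/2) * a i) →
            (1/2) * ‖A a₀ + B b₀ + w - A alam - B blam‖^2 + lam * ∑ i, |alam i| ≤
            (1/2) * ‖A a₀ + B b₀ + w - A a - B b‖^2 + lam * ∑ i, |a i|) ∧
        -- … and it is the unique one
        (∀ a b : EuclideanSpace ℝ (Fin P),
          (∀ i, 0 ≤ a i ∧ |b i| ≤ (h/2) * a i) →
          (∀ a' b' : EuclideanSpace ℝ (Fin P),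
            (∀ i, 0 ≤ a' i ∧ |b' i| ≤ (h/2) * a' i) →
            (1/2) * ‖A a₀ + B b₀ + w - A a - B b‖^2 + lam * ∑ i, |a i| ≤
            (1/2) * ‖A a₀ + B b₀ + w - A a' - B b'‖^2 + lam * ∑ i, |a' i|) →
          a = alam ∧ b = blam) ∧
        -- support recovery: I↑(a_λ,b_λ) = I↑, I↓(a_λ,b_λ) = I↓
        {i : Fin P | 0 < alam i + (2/h) * blam i} = Iup ∧
        {i : Fin P | 0 < alam i - (2/h) * blam i} = Idn ∧
        -- (a_λ,b_λ) = (a₀,b₀) + H_h(Ā⁺ w) − λ H_h((Ā^*Ā)⁻¹ 𝟙)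
        (∃ u v : EuclideanSpace ℝ (Fin P),
          (∀ i, i ∉ Iup → u i = 0) ∧ (∀ i, i ∉ Idn → v i = 0) ∧
          alam = a₀ + u + v ∧ blam = b₀ + (h/2) • (u - v) ∧
          (∀ i ∈ Iup, (ContinuousLinearMap.adjoint (A + (h/2) • B))
            (A (alam - a₀) + B (blam - b₀) - w) i = -lam) ∧
          (∀ i ∈ Idn, (ContinuousLinearMap.adjoint (A - (h/2) • B))
            (A (alam - a₀) + B (blam - b₀) - w) i = -lam)) := by
  have hinj := linearCombination_coneDictionary_injOn hfullrank
  obtain ⟨z, hz, hq_on, hq_off⟩ := exists_coneDictionary_preCertificate hu₀ hv₀ hqF hqF_gram.1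
    hqF_gram.2 hqF_up hqF_dn
  obtain ⟨C₁, C₂, hC₁, hC₂, hfuchs⟩ := exists_nnLasso_fuchs_solution hinj z hz hq_on hq_off
  refine ⟨C₁ / 2, C₂, by positivity, hC₂, fun lam hlam hTu hTd w hw => ?_⟩
  set x₀ := coneCoords h a₀ b₀
  have hx₀S : ∀ s ∉ Sum.inl '' Iup ∪ Sum.inr '' Idn, x₀ s = 0 := fun s hs =>
    coneCoords_eq_zero_of_notMem hh hcone₀ (by rwa [← hIup, ← hIdn])
  have hT : ∀ s ∈ Sum.inl '' Iup ∪ Sum.inr '' Idn, lam ≤ C₁ * x₀ s := by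
    rintro (i | i) hs <;>
      simp only [Sum.inl_mem_image_union_iff, Sum.inr_mem_image_union_iff] at hs
    · simpa [x₀, coneCoords, mul_div_assoc', div_mul_eq_mul_div, mul_comm] using hTu i hs
    · simpa [x₀, coneCoords, mul_div_assoc', div_mul_eq_mul_div, mul_comm] using hTd i hs
  obtain ⟨x, hmin, huniq, hxpos, hxS, hon⟩ := hfuchs x₀ hx₀S lam hlam hT w hw
  rw [linearCombination_coneDictionary_eq_coneParam, coneParam_coneCoords hh.ne'] at hmin huniq hon
  obtain ⟨hsol, huniq⟩ := coneLasso_isUniqueMin_of_nnLasso hh hmin huniq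
  obtain ⟨hsupp_up, hsupp_dn⟩ := setOf_coneParam_pos hh.ne' hxpos hxS
  obtain ⟨u, v, hu, hv, ha, hb⟩ := exists_coneParam_eq_add h hx₀S hxS
  rw [coneParam_coneCoords hh.ne'] at ha hb
  refine ⟨_, _, hsol, huniq, hsupp_up, hsupp_dn, u, v, hu, hv, ha, hb, fun i hi => ?_,
    fun i hi => ?_⟩
  · rw [coneParam_residual, map_neg, PiLp.neg_apply, ← inner_coneDictionary_inl,
      hon (.inl i) (Sum.inl_mem_image_union_iff.2 hi)]
  · rw [coneParam_residual, map_neg, PiLp.neg_apply, ← inner_coneDictionary_inr,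
      hon (.inr i) (Sum.inr_mem_image_union_iff.2 hi)]

/-- **Exact support recovery at low noise for the abstract cone-constrained lasso
(Fuchs-type result for C-BP).**  `H` is a real Hilbert space, `A, B : ℝ^P → H`,
`h > 0`, and `C_h^P` is the cone `{(a,b) : aᵢ ≥ 0, |bᵢ| ≤ (h/2)aᵢ}`.
`(a₀,b₀) ∈ C_h^P ∖ {0}` with `I↑ = {i : a₀ᵢ + (2/h)b₀ᵢ > 0}`,
`I↓ = {i : a₀ᵢ − (2/h)b₀ᵢ > 0}`; `Ā = ((A+(h/2)B)_{I↑}, (A−(h/2)B)_{I↓})` has full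
rank, and the Fuchs pre-certificate `q_F = Ā(Ā^*Ā)⁻¹𝟙` (encoded by `q_F = Ā(u₀,v₀)`
with the Gram equations) satisfies the strict dual conditions off `I↑, I↓`.  Then
for `0 < λ ≤ C¹T` and `‖w‖ < C²λ` the solution of `Q_λ(A a₀ + B b₀ + w)` is unique,
has the same `I↑, I↓`, and is given by
`(a_λ,b_λ) = (a₀,b₀) + H_h(Ā⁺w) − λ H_h((Ā^*Ā)⁻¹𝟙)`
(encoded by the normal equations below). -/
theorem cbp_fuchs_low_noise_support_recovery
    {H : Type*} [NormedAddCommGroup H] [InnerProductSpace ℝ H] [CompleteSpace H]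
    {P : ℕ} (A B : EuclideanSpace ℝ (Fin P) →L[ℝ] H)
    (h : ℝ) (hh : 0 < h)
    (a₀ b₀ : EuclideanSpace ℝ (Fin P))
    (hcone₀ : ∀ i, 0 ≤ a₀ i ∧ |b₀ i| ≤ (h/2) * a₀ i)
    (hne : ¬ (a₀ = 0 ∧ b₀ = 0))
    (Iup Idn : Set (Fin P))
    (hIup : Iup = {i : Fin P | 0 < a₀ i + (2/h) * b₀ i})
    (hIdn : Idn = {i : Fin P | 0 < a₀ i - (2/h) * b₀ i})
    -- Ā = ((A+(h/2)B)_{I↑}, (A−(h/2)B)_{I↓}) has full rank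
    (hfullrank : ∀ u v : EuclideanSpace ℝ (Fin P),
      (∀ i, i ∉ Iup → u i = 0) → (∀ i, i ∉ Idn → v i = 0) →
      (A + (h/2) • B) u + (A - (h/2) • B) v = 0 → u = 0 ∧ v = 0)
    -- the Fuchs pre-certificate q_F = Ā(Ā^*Ā)⁻¹𝟙
    (qF : H) (u₀ v₀ : EuclideanSpace ℝ (Fin P))
    (hu₀ : ∀ i, i ∉ Iup → u₀ i = 0) (hv₀ : ∀ i, i ∉ Idn → v₀ i = 0)
    (hqF : qF = (A + (h/2) • B) u₀ + (A - (h/2) • B) v₀)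
    (hqF_gram : (∀ i ∈ Iup, (ContinuousLinearMap.adjoint (A + (h/2) • B)) qF i = 1) ∧
      (∀ i ∈ Idn, (ContinuousLinearMap.adjoint (A - (h/2) • B)) qF i = 1))
    -- the strict pre-certificate conditions
    (hqF_up : ∀ k, k ∉ Iup → (ContinuousLinearMap.adjoint (A + (h/2) • B)) qF k < 1)
    (hqF_dn : ∀ k, k ∉ Idn → (ContinuousLinearMap.adjoint (A - (h/2) • B)) qF k < 1) :
    ∃ C₁ C₂ : ℝ, 0 < C₁ ∧ 0 < C₂ ∧
      ∀ lam : ℝ, 0 < lam →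
      (∀ i ∈ Iup, lam ≤ C₁ * (a₀ i + (2/h) * b₀ i)) →
      (∀ i ∈ Idn, lam ≤ C₁ * (a₀ i - (2/h) * b₀ i)) →
      ∀ w : H, ‖w‖ < C₂ * lam →
      ∃ alam blam : EuclideanSpace ℝ (Fin P),
        -- (a_λ, b_λ) is a solution of Q_λ(A a₀ + B b₀ + w) …
        ((∀ i, 0 ≤ alam i ∧ |blam i| ≤ (h/2) * alam i) ∧
          ∀ a b : EuclideanSpace ℝ (Fin P),
            (∀ i, 0 ≤ a i ∧ |b i| ≤ (h/2) * a i) →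
            (1/2) * ‖A a₀ + B b₀ + w - A alam - B blam‖^2 + lam * ∑ i, |alam i| ≤
            (1/2) * ‖A a₀ + B b₀ + w - A a - B b‖^2 + lam * ∑ i, |a i|) ∧
        -- … and it is the unique one
        (∀ a b : EuclideanSpace ℝ (Fin P),
          (∀ i, 0 ≤ a i ∧ |b i| ≤ (h/2) * a i) →
          (∀ a' b' : EuclideanSpace ℝ (Fin P),
            (∀ i, 0 ≤ a' i ∧ |b' i| ≤ (h/2) * a' i) →
            (1/2) * ‖A a₀ + B b₀ + w - A a - B b‖^2 + lam * ∑ i, |a i| ≤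
            (1/2) * ‖A a₀ + B b₀ + w - A a' - B b'‖^2 + lam * ∑ i, |a' i|) →
          a = alam ∧ b = blam) ∧
        -- support recovery: I↑(a_λ,b_λ) = I↑, I↓(a_λ,b_λ) = I↓
        {i : Fin P | 0 < alam i + (2/h) * blam i} = Iup ∧
        {i : Fin P | 0 < alam i - (2/h) * blam i} = Idn ∧
        -- (a_λ,b_λ) = (a₀,b₀) + H_h(Ā⁺ w) − λ H_h((Ā^*Ā)⁻¹ 𝟙)
        (∃ u v : EuclideanSpace ℝ (Fin P),
          (∀ i, i ∉ Iup → u i = 0) ∧ (∀ i, i ∉ Idn → v i = 0) ∧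
          alam = a₀ + u + v ∧ blam = b₀ + (h/2) • (u - v) ∧
          (∀ i ∈ Iup, (ContinuousLinearMap.adjoint (A + (h/2) • B))
            (A (alam - a₀) + B (blam - b₀) - w) i = -lam) ∧
          (∀ i ∈ Idn, (ContinuousLinearMap.adjoint (A - (h/2) • B))
            (A (alam - a₀) + B (blam - b₀) - w) i = -lam)) :=
  cbp_fuchs_low_noise_support_recovery_general A B h hh a₀ b₀ hcone₀ Iup Idn hIup hIdn hfullrank qF
    u₀ v₀ hu₀ hv₀ hqF hqF_gram hqF_up hqF_dn
end
end

section
/- Characterization of the extended support for the abstract cone-constrained lasso: Let (a₀,b₀) ∈ C_h^P be a solution of Q_0(A a₀ + B b₀), with I↑ = I↑(a₀,b₀) and I↓ = I↓(a₀,b₀). Let J↑, J↓ ⊆ {0,…,P−1} with I↑ ⊆ J↑ and I↓ ⊆ J↓, assume Ã = ((A+(h/2)B)_{J↑}, (A−(h/2)B)_{J↓}) has full rank, and define (u_{J↑}; v_{J↓}) = −(Ã^*Ã)^{-1}𝟙 and q̃ = Ã(Ã^*Ã)^{-1}𝟙. Then (J↑, J↓) equals the extended support (ext↑, ext↓) of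 (a₀,b₀) if and only if both: (i) u_j ≥ 0 for all j ∈ J↑∖I↑ and v_j ≥ 0 for all j ∈ J↓∖I↓; and (ii) ((A+(h/2)B)^* q̃)_k < 1 for all k ∉ J↑ and ((A−(h/2)B)^* q̃)_k < 1 for all k ∉ J↓. In that case the minimal-norm dual solution is q₀ = q̃. -/
open scoped BigOperators RealInnerProductSpace
noncomputable section

/-!
Put `α = a₀ + (2/h) b₀` and `β = a₀ - (2/h) b₀`; the cone condition makes `α, β ≥ 0`. For the
block operator `Φ = (A + (h/2) B, A - (h/2) B)` on `ℝ^(P ⊕ P)` one has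
`Φ (α, β) = 2 (A a₀ + B b₀)` and the dual constraints read `Φ^* q ≤ 1`, so the problem is
nonnegative basis pursuit for the dictionary `Φ`, with `J = J↑ ⊔ J↓` and `q̃ = -Φ (u, v)`.

If `J` is the extended support, then `q̃ - q₀` is orthogonal to the data and keeps every active
constraint, so the first-order condition of the minimal-norm problem at `q₀` gives
`⟪q₀, q̃ - q₀⟫ ≥ 0`, while `⟪q̃, q̃ - q₀⟫ = 0`; hence `q₀ = q̃`. Testing the same condition
against a direction that relaxes only the `j`-th active constraint (it exists because `Φ` is
injective on vectors supported in `J`) gives the sign condition at `j`. Conversely, under (i) and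
(ii) `q̃` is feasible and attains the weak-duality bound, so it is a dual solution; complementary
slackness gives `Φ^* q₀ = 1` on the support of `(α, β)`, so (i) yields `⟪q̃, q₀ - q̃⟫ ≥ 0`, and
with `‖q₀‖ ≤ ‖q̃‖` this forces `q₀ = q̃`.
-/

open Filter Topology ContinuousLinearMap

theorem add_mul_nonneg_and_sub_mul_nonneg {a b c d : ℝ} (hc : 0 < c) (hcd : c * d = 1)
    (hab : |b| ≤ c * a) : 0 ≤ a + d * b ∧ 0 ≤ a - d * b := by
  have hd : 0 < d := pos_of_mul_pos_right (hcd ▸ one_pos) hc.le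
  obtain ⟨h1, h2⟩ := abs_le.mp hab
  constructor <;> nlinarith

theorem inl_mem_image_inl_union_image_inr {ι κ : Type*} {I : Set ι} {K : Set κ} {i : ι} :
    (Sum.inl i : ι ⊕ κ) ∈ Sum.inl '' I ∪ Sum.inr '' K ↔ i ∈ I := by
  simp

theorem inr_mem_image_inl_union_image_inr {ι κ : Type*} {I : Set ι} {K : Set κ} {k : κ} :
    (Sum.inr k : ι ⊕ κ) ∈ Sum.inl '' I ∪ Sum.inr '' K ↔ k ∈ K := by
  simp

theorem forall_mem_image_inl_union_image_inr {ι κ : Type*} {I : Set ι} {K : Set κ}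
    {p : ι ⊕ κ → Prop} :
    (∀ x ∈ Sum.inl '' I ∪ Sum.inr '' K, p x) ↔ (∀ i ∈ I, p (.inl i)) ∧ ∀ k ∈ K, p (.inr k) := by
  simp only [Sum.forall, inl_mem_image_inl_union_image_inr, inr_mem_image_inl_union_image_inr]

theorem forall_notMem_image_inl_union_image_inr {ι κ : Type*} {I : Set ι} {K : Set κ}
    {p : ι ⊕ κ → Prop} :
    (∀ x ∉ Sum.inl '' I ∪ Sum.inr '' K, p x) ↔ (∀ i ∉ I, p (.inl i)) ∧ ∀ k ∉ K, p (.inr k) := by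
  simp only [Sum.forall, inl_mem_image_inl_union_image_inr, inr_mem_image_inl_union_image_inr]

section InnerProduct

variable {F : Type*} [NormedAddCommGroup F] [InnerProductSpace ℝ F]

theorem inner_nonneg_of_eventually_norm_le {x d : F}
    (h : ∀ᶠ t in 𝓝[>] (0 : ℝ), ‖x‖ ≤ ‖x + t • d‖) : 0 ≤ ⟪x, d⟫ := by
  have hlim : Tendsto (fun t : ℝ => 2 * ⟪x, d⟫ + t * ‖d‖ ^ 2) (𝓝[>] 0) (𝓝 (2 * ⟪x, d⟫)) := by
    have hcont : Continuous fun t : ℝ => 2 * ⟪x, d⟫ + t * ‖d‖ ^ 2 := by fun_prop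
    simpa using (hcont.tendsto 0).mono_left nhdsWithin_le_nhds
  have hpos : ∀ᶠ t in 𝓝[>] (0 : ℝ), 0 ≤ 2 * ⟪x, d⟫ + t * ‖d‖ ^ 2 := by
    filter_upwards [h, self_mem_nhdsWithin] with t ht (htpos : 0 < t)
    have hsq := pow_le_pow_left₀ (norm_nonneg x) ht 2
    rw [norm_add_sq_real, norm_smul, real_inner_smul_right, Real.norm_of_nonneg htpos.le] at hsq
    nlinarith
  linarith [ge_of_tendsto hlim hpos]

theorem eq_of_norm_le_of_inner_sub_nonneg {x y : F} (hxy : ‖x‖ ≤ ‖y‖) (h : 0 ≤ ⟪y, x - y⟫) :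
    x = y := by
  have hsq := pow_le_pow_left₀ (norm_nonneg x) hxy 2
  rw [← sub_add_cancel x y, norm_add_sq_real, real_inner_comm] at hsq
  rw [← sub_eq_zero, ← norm_eq_zero]
  nlinarith [norm_nonneg (x - y)]

theorem eq_of_inner_sub_le {x y : F} (h : ⟪y, y - x⟫ ≤ ⟪x, y - x⟫) : x = y := by
  have : ‖y - x‖ ^ 2 ≤ 0 := by
    rw [← real_inner_self_eq_norm_sq, inner_sub_left]; linarith
  exact (sub_eq_zero.mp (norm_eq_zero.mp (by nlinarith [norm_nonneg (y - x)]))).symm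

end InnerProduct

structure IsMinNormMaximizer {H : Type*} [NormedAddCommGroup H] [InnerProductSpace ℝ H]
    (D : Set H) (y q₀ : H) : Prop where
  mem : q₀ ∈ D
  inner_le : ∀ q ∈ D, ⟪y, q⟫ ≤ ⟪y, q₀⟫
  norm_le : ∀ q ∈ D, ⟪y, q⟫ = ⟪y, q₀⟫ → ‖q₀‖ ≤ ‖q‖

theorem IsMinNormMaximizer.smul {H : Type*} [NormedAddCommGroup H] [InnerProductSpace ℝ H]
    {D : Set H} {y q₀ : H} (h : IsMinNormMaximizer D y q₀) {c : ℝ} (hc : 0 < c) :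
    IsMinNormMaximizer D (c • y) q₀ where
  mem := h.mem
  inner_le q hq := by
    simpa only [real_inner_smul_left] using mul_le_mul_of_nonneg_left (h.inner_le q hq) hc.le
  norm_le q hq hyq := h.norm_le q hq <| by
    simpa only [real_inner_smul_left, mul_right_inj' hc.ne'] using hyq

section Dictionary

variable {κ : Type*} [Fintype κ] {H : Type*} [NormedAddCommGroup H] [InnerProductSpace ℝ H]
  [CompleteSpace H] (Φ : EuclideanSpace ℝ κ →L[ℝ] H)

def dualFeasibleSet : Set H := {q | ∀ k, adjoint Φ q k ≤ 1}

def extSupport (q : H) : Set κ := {j | adjoint Φ q j = 1}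

theorem inner_apply_eq_sum_mul_adjoint (x : EuclideanSpace ℝ κ) (q : H) :
    ⟪Φ x, q⟫ = ∑ i, x i * adjoint Φ q i := by
  rw [← adjoint_inner_right, PiLp.inner_apply]
  exact Finset.sum_congr rfl fun i _ => mul_comm _ _

theorem adjoint_apply_eq_inner_single [DecidableEq κ] (q : H) (k : κ) :
    adjoint Φ q k = ⟪Φ (EuclideanSpace.single k 1), q⟫ := by
  rw [← adjoint_inner_right, EuclideanSpace.inner_single_left, map_one, one_mul]

variable {Φ}

theorem inner_apply_eq_sum_of_adjoint_apply_eq {J : Set κ} {x : EuclideanSpace ℝ κ} {q : H}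
    {c : κ → ℝ} (hx : ∀ i ∉ J, x i = 0) (hq : ∀ j ∈ J, adjoint Φ q j = c j) :
    ⟪Φ x, q⟫ = ∑ i, x i * c i := by
  rw [inner_apply_eq_sum_mul_adjoint]
  refine Finset.sum_congr rfl fun i _ => ?_
  by_cases hi : i ∈ J
  · rw [hq i hi]
  · rw [hx i hi, zero_mul, zero_mul]

theorem sum_sub_inner_apply (γ : EuclideanSpace ℝ κ) (q : H) :
    ∑ i, γ i - ⟪Φ γ, q⟫ = ∑ i, γ i * (1 - adjoint Φ q i) := by
  simp only [inner_apply_eq_sum_mul_adjoint, mul_sub, mul_one, Finset.sum_sub_distrib]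

theorem inner_apply_le_sum {γ : EuclideanSpace ℝ κ} (hγ : ∀ i, 0 ≤ γ i) {q : H}
    (hq : q ∈ dualFeasibleSet Φ) : ⟪Φ γ, q⟫ ≤ ∑ i, γ i := by
  have hsum := sum_sub_inner_apply (Φ := Φ) γ q
  have hslack : 0 ≤ ∑ i, γ i * (1 - adjoint Φ q i) :=
    Finset.sum_nonneg fun i _ => mul_nonneg (hγ i) (sub_nonneg.mpr (hq i))
  linarith

theorem adjoint_apply_eq_one_of_inner_apply_eq_sum {γ : EuclideanSpace ℝ κ} (hγ : ∀ i, 0 ≤ γ i)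
    {q : H} (hq : q ∈ dualFeasibleSet Φ) (heq : ⟪Φ γ, q⟫ = ∑ i, γ i) {i : κ} (hi : 0 < γ i) :
    adjoint Φ q i = 1 := by
  have hsum := sum_sub_inner_apply (Φ := Φ) γ q
  rw [heq, sub_self, eq_comm, Finset.sum_eq_zero_iff_of_nonneg fun i _ =>
    mul_nonneg (hγ i) (sub_nonneg.mpr (hq i))] at hsum
  linarith [(mul_eq_zero.mp (hsum i (Finset.mem_univ i))).resolve_left hi.ne']

theorem eventually_add_smul_mem_dualFeasibleSet {q d : H} (hq : q ∈ dualFeasibleSet Φ)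
    (hd : ∀ k, adjoint Φ q k = 1 → adjoint Φ d k ≤ 0) :
    ∀ᶠ t in 𝓝[>] (0 : ℝ), q + t • d ∈ dualFeasibleSet Φ := by
  refine eventually_all.mpr fun k => ?_
  simp only [map_add, map_smul, PiLp.add_apply, PiLp.smul_apply, smul_eq_mul]
  rcases (hq k).lt_or_eq with hlt | heq
  · have hcont : Continuous fun t : ℝ => adjoint Φ q k + t * adjoint Φ d k := by fun_prop
    have hlim := (hcont.tendsto 0).mono_left (nhdsWithin_le_nhds (s := Set.Ioi 0))
    simp only [zero_mul, add_zero] at hlim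
    exact hlim.eventually (eventually_le_nhds hlt)
  · filter_upwards [self_mem_nhdsWithin] with t (ht : 0 < t)
    nlinarith [hd k heq]

theorem IsMinNormMaximizer.inner_nonneg_of_feasible_direction {y q₀ : H}
    (hq₀ : IsMinNormMaximizer (dualFeasibleSet Φ) y q₀) {d : H} (hyd : ⟪y, d⟫ = 0)
    (hd : ∀ k, adjoint Φ q₀ k = 1 → adjoint Φ d k ≤ 0) : 0 ≤ ⟪q₀, d⟫ := by
  refine inner_nonneg_of_eventually_norm_le ?_
  filter_upwards [eventually_add_smul_mem_dualFeasibleSet hq₀.mem hd] with t ht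
  exact hq₀.norm_le _ ht (by rw [inner_add_right, real_inner_smul_right, hyd, mul_zero, add_zero])

theorem exists_adjoint_apply_eq {J : Set κ}
    (hΦ : ∀ x : EuclideanSpace ℝ κ, (∀ i ∉ J, x i = 0) → Φ x = 0 → x = 0) (c : κ → ℝ) :
    ∃ q : H, ∀ j ∈ J, adjoint Φ q j = c j := by
  classical
  let S : EuclideanSpace ℝ κ →ₗ[ℝ] EuclideanSpace ℝ κ :=
    { toFun x := WithLp.toLp 2 (J.piecewise (adjoint Φ (Φ x)) x)
      map_add' x y := by ext i; by_cases hi : i ∈ J <;> simp [hi]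
      map_smul' a x := by ext i; by_cases hi : i ∈ J <;> simp [hi] }
  have hS : ∀ x i, S x i = if i ∈ J then adjoint Φ (Φ x) i else x i := fun _ _ => rfl
  have hinj : Function.Injective S := by
    rw [← LinearMap.ker_eq_bot, LinearMap.ker_eq_bot']
    intro x hx
    have hxJ : ∀ i ∉ J, x i = 0 := fun i hi => by simpa [hS, hi] using congr($hx i)
    have hgram : ∀ j ∈ J, adjoint Φ (Φ x) j = 0 := fun j hj => by simpa [hS, hj] using congr($hx j)
    refine hΦ x hxJ ((inner_self_eq_zero (𝕜 := ℝ)).mp ?_)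
    simpa using inner_apply_eq_sum_of_adjoint_apply_eq hxJ hgram
  obtain ⟨x, hx⟩ := LinearMap.injective_iff_surjective.mp hinj (WithLp.toLp 2 c)
  exact ⟨Φ x, fun j hj => by simpa [hS, hj] using congr($hx j)⟩

end Dictionary

section Certificate

variable {κ : Type*} [Fintype κ] {H : Type*} [NormedAddCommGroup H] [InnerProductSpace ℝ H]
  [CompleteSpace H] {Φ : EuclideanSpace ℝ κ →L[ℝ] H} {J : Set κ} {γ w : EuclideanSpace ℝ κ}
  {q₀ : H}

theorem adjoint_neg_apply_eq_one (hw : ∀ j ∈ J, adjoint Φ (Φ w) j = -1) {j : κ} (hj : j ∈ J) :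
    adjoint Φ (-Φ w) j = 1 := by
  rw [map_neg, PiLp.neg_apply, hw j hj, neg_neg]

namespace IsMinNormMaximizer

theorem eq_neg_apply_of_sign_of_lt_one (hq₀ : IsMinNormMaximizer (dualFeasibleSet Φ) (Φ γ) q₀)
    (hγ : ∀ i, 0 ≤ γ i) (hγJ : ∀ i ∉ J, γ i = 0) (hwJ : ∀ i ∉ J, w i = 0)
    (hw : ∀ j ∈ J, adjoint Φ (Φ w) j = -1)
    (hsign : ∀ j ∈ J, ¬ 0 < γ j → 0 ≤ w j) (hlt : ∀ k ∉ J, adjoint Φ (-Φ w) k < 1) :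
    q₀ = -Φ w := by
  have hfeas : -Φ w ∈ dualFeasibleSet Φ := fun k => by
    by_cases hk : k ∈ J
    · exact (adjoint_neg_apply_eq_one hw hk).le
    · exact (hlt k hk).le
  have hval : ⟪Φ γ, -Φ w⟫ = ∑ i, γ i := by
    simpa using
      inner_apply_eq_sum_of_adjoint_apply_eq hγJ fun j hj => adjoint_neg_apply_eq_one hw hj
  have hopt : ⟪Φ γ, q₀⟫ = ∑ i, γ i :=
    le_antisymm (inner_apply_le_sum hγ hq₀.mem) (hval ▸ hq₀.inner_le _ hfeas)
  refine eq_of_norm_le_of_inner_sub_nonneg (hq₀.norm_le _ hfeas (hval.trans hopt.symm)) ?_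
  rw [inner_neg_left, inner_apply_eq_sum_mul_adjoint, neg_nonneg]
  refine Finset.sum_nonpos fun i _ => ?_
  by_cases hiJ : i ∈ J
  · rw [map_sub, PiLp.sub_apply, adjoint_neg_apply_eq_one hw hiJ]
    by_cases hiγ : 0 < γ i
    · rw [adjoint_apply_eq_one_of_inner_apply_eq_sum hγ hq₀.mem hopt hiγ, sub_self, mul_zero]
    · exact mul_nonpos_of_nonneg_of_nonpos (hsign i hiJ hiγ) (sub_nonpos.mpr (hq₀.mem i))
  · rw [hwJ i hiJ, zero_mul]

theorem eq_neg_apply_of_extSupport_eq (hq₀ : IsMinNormMaximizer (dualFeasibleSet Φ) (Φ γ) q₀)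
    (hγJ : ∀ i ∉ J, γ i = 0) (hwJ : ∀ i ∉ J, w i = 0) (hw : ∀ j ∈ J, adjoint Φ (Φ w) j = -1)
    (hJ : J = extSupport Φ q₀) : q₀ = -Φ w := by
  have hdJ : ∀ j ∈ J, adjoint Φ (-Φ w - q₀) j = 0 := fun j hj => by
    have hq₀j : adjoint Φ q₀ j = 1 := by rw [hJ] at hj; exact hj
    rw [map_sub, PiLp.sub_apply, adjoint_neg_apply_eq_one hw hj, hq₀j, sub_self]
  have hyd : ⟪Φ γ, -Φ w - q₀⟫ = 0 := by simpa using inner_apply_eq_sum_of_adjoint_apply_eq hγJ hdJ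
  have hq₀d : 0 ≤ ⟪q₀, -Φ w - q₀⟫ :=
    hq₀.inner_nonneg_of_feasible_direction hyd fun k hk => (hdJ k (by rw [hJ]; exact hk)).le
  have hwd : ⟪-Φ w, -Φ w - q₀⟫ = 0 := by
    rw [inner_neg_left, inner_apply_eq_sum_of_adjoint_apply_eq hwJ hdJ]; simp
  exact eq_of_inner_sub_le (hwd ▸ hq₀d)

theorem nonneg_of_extSupport_eq (hq₀ : IsMinNormMaximizer (dualFeasibleSet Φ) (Φ γ) q₀)
    (hγ : ∀ i, 0 ≤ γ i) (hγJ : ∀ i ∉ J, γ i = 0)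
    (hΦJ : ∀ x : EuclideanSpace ℝ κ, (∀ i ∉ J, x i = 0) → Φ x = 0 → x = 0)
    (hwJ : ∀ i ∉ J, w i = 0) (hw : ∀ j ∈ J, adjoint Φ (Φ w) j = -1) (hJ : J = extSupport Φ q₀)
    {j₀ : κ} (hγj₀ : ¬ 0 < γ j₀) : 0 ≤ w j₀ := by
  classical
  -- `d` decreases the `j₀`-th active constraint and keeps the other active ones
  obtain ⟨d, hd⟩ := exists_adjoint_apply_eq hΦJ fun j => if j = j₀ then -1 else 0
  have hyd : ⟪Φ γ, d⟫ = 0 := by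
    rw [inner_apply_eq_sum_of_adjoint_apply_eq hγJ hd]
    simp [le_antisymm (not_lt.mp hγj₀) (hγ j₀)]
  have hq₀d := hq₀.inner_nonneg_of_feasible_direction hyd fun k hk => by
    rw [hd k (by rw [hJ]; exact hk)]; split_ifs <;> norm_num
  rw [hq₀.eq_neg_apply_of_extSupport_eq hγJ hwJ hw hJ, inner_neg_left,
    inner_apply_eq_sum_of_adjoint_apply_eq hwJ hd] at hq₀d
  simpa using hq₀d

theorem extSupport_eq_iff (hq₀ : IsMinNormMaximizer (dualFeasibleSet Φ) (Φ γ) q₀)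
    (hγ : ∀ i, 0 ≤ γ i) (hγJ : ∀ i ∉ J, γ i = 0)
    (hΦJ : ∀ x : EuclideanSpace ℝ κ, (∀ i ∉ J, x i = 0) → Φ x = 0 → x = 0)
    (hwJ : ∀ i ∉ J, w i = 0) (hw : ∀ j ∈ J, adjoint Φ (Φ w) j = -1) :
    J = extSupport Φ q₀ ↔
      (∀ j ∈ J, ¬ 0 < γ j → 0 ≤ w j) ∧ ∀ k ∉ J, adjoint Φ (-Φ w) k < 1 := by
  constructor
  · intro hJ
    have hq := hq₀.eq_neg_apply_of_extSupport_eq hγJ hwJ hw hJ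
    refine ⟨fun j _ hγj => hq₀.nonneg_of_extSupport_eq hγ hγJ hΦJ hwJ hw hJ hγj,
      fun k hk => ?_⟩
    rw [hJ] at hk
    exact hq ▸ (hq₀.mem k).lt_of_ne hk
  · rintro ⟨hsign, hlt⟩
    have hq := hq₀.eq_neg_apply_of_sign_of_lt_one hγ hγJ hwJ hw hsign hlt
    ext k
    rw [extSupport, Set.mem_ofPred_eq, hq]
    exact ⟨adjoint_neg_apply_eq_one hw, fun hk => by_contra fun hkJ => (hlt k hkJ).ne hk⟩

end IsMinNormMaximizer

end Certificate

theorem add_smul_apply_add_sub_smul_apply {E H : Type*} [AddCommGroup E] [Module ℝ E]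
    [TopologicalSpace E] [AddCommGroup H] [Module ℝ H] [TopologicalSpace H]
    [IsTopologicalAddGroup H] [ContinuousConstSMul ℝ H] (A B : E →L[ℝ] H) {c d : ℝ}
    (hcd : c * d = 1) (a b : E) :
    (A + c • B) (a + d • b) + (A - c • B) (a - d • b) = (2 : ℝ) • (A a + B b) := by
  have hdc : d * c = 1 := by rw [mul_comm, hcd]
  simp only [add_apply, sub_apply, smul_apply, map_add, map_sub, map_smul, smul_add, smul_sub,
    smul_smul, hdc, one_smul]
  module

section BlockRow

variable {ι κ : Type*} [Fintype ι] [Fintype κ] {H : Type*} [NormedAddCommGroup H]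
  [InnerProductSpace ℝ H]

def blockRow (M : EuclideanSpace ℝ ι →L[ℝ] H) (N : EuclideanSpace ℝ κ →L[ℝ] H) :
    EuclideanSpace ℝ (ι ⊕ κ) →L[ℝ] H :=
  LinearMap.toContinuousLinearMap
    { toFun x := M (WithLp.toLp 2 (x ∘ Sum.inl)) + N (WithLp.toLp 2 (x ∘ Sum.inr))
      map_add' x y := by
        simp only [WithLp.ofLp_add, Pi.add_comp, WithLp.toLp_add, map_add]
        abel
      map_smul' c x := by
        simp only [WithLp.ofLp_smul, Pi.smul_comp, WithLp.toLp_smul, map_smul, RingHom.id_apply,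
          smul_add] }

variable {M : EuclideanSpace ℝ ι →L[ℝ] H} {N : EuclideanSpace ℝ κ →L[ℝ] H}

theorem blockRow_toLp_sumElim (u : EuclideanSpace ℝ ι) (v : EuclideanSpace ℝ κ) :
    blockRow M N (WithLp.toLp 2 (Sum.elim u v)) = M u + N v :=
  rfl

theorem blockRow_single_inl [DecidableEq ι] [DecidableEq κ] (i : ι) (a : ℝ) :
    blockRow M N (EuclideanSpace.single (.inl i) a) = M (EuclideanSpace.single i a) := by
  have hinl : WithLp.toLp 2 (EuclideanSpace.single (.inl i : ι ⊕ κ) a ∘ Sum.inl) =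
      EuclideanSpace.single i a := by
    ext j; simp [Pi.single_apply]
  have hinr : WithLp.toLp 2 (EuclideanSpace.single (.inl i : ι ⊕ κ) a ∘ Sum.inr) = 0 := by
    ext j; simp
  show M _ + N _ = _
  rw [hinl, hinr, map_zero, add_zero]

theorem blockRow_single_inr [DecidableEq ι] [DecidableEq κ] (k : κ) (a : ℝ) :
    blockRow M N (EuclideanSpace.single (.inr k) a) = N (EuclideanSpace.single k a) := by
  have hinl : WithLp.toLp 2 (EuclideanSpace.single (.inr k : ι ⊕ κ) a ∘ Sum.inl) = 0 := by
    ext j; simp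
  have hinr : WithLp.toLp 2 (EuclideanSpace.single (.inr k : ι ⊕ κ) a ∘ Sum.inr) =
      EuclideanSpace.single k a := by
    ext j; simp [Pi.single_apply]
  show M _ + N _ = _
  rw [hinl, hinr, map_zero, zero_add]

theorem eq_zero_of_blockRow_eq_zero {I : Set ι} {K : Set κ}
    (hMN : ∀ u v, (∀ i ∉ I, u i = 0) → (∀ k ∉ K, v k = 0) → M u + N v = 0 → u = 0 ∧ v = 0)
    (x : EuclideanSpace ℝ (ι ⊕ κ)) (hx : ∀ j ∉ Sum.inl '' I ∪ Sum.inr '' K, x j = 0)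
    (hx0 : blockRow M N x = 0) : x = 0 := by
  obtain ⟨hu, hv⟩ := hMN _ _ (fun i hi => hx _ (mt inl_mem_image_inl_union_image_inr.mp hi))
    (fun k hk => hx _ (mt inr_mem_image_inl_union_image_inr.mp hk)) hx0
  ext (i | k)
  · exact congr($hu i)
  · exact congr($hv k)

variable [CompleteSpace H]

theorem adjoint_blockRow_apply_inl (q : H) (i : ι) :
    adjoint (blockRow M N) q (.inl i) = adjoint M q i := by
  classical
  rw [adjoint_apply_eq_inner_single, blockRow_single_inl, ← adjoint_apply_eq_inner_single]

theorem adjoint_blockRow_apply_inr (q : H) (k : κ) :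
    adjoint (blockRow M N) q (.inr k) = adjoint N q k := by
  classical
  rw [adjoint_apply_eq_inner_single, blockRow_single_inr, ← adjoint_apply_eq_inner_single]

theorem dualFeasibleSet_blockRow_add_sub {A B : EuclideanSpace ℝ ι →L[ℝ] H} {c : ℝ} (hc : 0 ≤ c) :
    dualFeasibleSet (blockRow (A + c • B) (A - c • B)) =
      {q | ∀ k, adjoint A q k + c * |adjoint B q k| ≤ 1} := by
  ext q
  simp only [dualFeasibleSet, Set.mem_ofPred_eq, Sum.forall, adjoint_blockRow_apply_inl,
    adjoint_blockRow_apply_inr, ← forall_and]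
  refine forall_congr' fun k => ?_
  simp only [map_add, map_sub, map_smul, add_apply, sub_apply, smul_apply, PiLp.add_apply,
    PiLp.sub_apply, PiLp.smul_apply, smul_eq_mul]
  have hle := mul_le_mul_of_nonneg_left (le_abs_self (adjoint B q k)) hc
  have hge := mul_le_mul_of_nonneg_left (neg_abs_le (adjoint B q k)) hc
  constructor
  · rintro ⟨hadd, hsub⟩
    rcases abs_cases (adjoint B q k) with ⟨habs, -⟩ | ⟨habs, -⟩ <;> rw [habs] <;> linarith
  · intro h
    constructor <;> linarith

end BlockRow

theorem cbp_extended_support_characterization_general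
    {H : Type*} [NormedAddCommGroup H] [InnerProductSpace ℝ H] [CompleteSpace H]
    {P : ℕ} (A B : EuclideanSpace ℝ (Fin P) →L[ℝ] H)
    (h : ℝ) (hh : 0 < h)
    (a₀ b₀ : EuclideanSpace ℝ (Fin P))
    (hcone₀ : ∀ i, 0 ≤ a₀ i ∧ |b₀ i| ≤ (h/2) * a₀ i)
    (Iup Idn : Set (Fin P))
    (hIup : Iup = {i : Fin P | 0 < a₀ i + (2/h) * b₀ i})
    (hIdn : Idn = {i : Fin P | 0 < a₀ i - (2/h) * b₀ i})
    -- q₀ : the minimal-norm solution of the dual problem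
    (q₀ : H)
    (hq₀_feas : ∀ k, (ContinuousLinearMap.adjoint A) q₀ k
      + (h/2) * |(ContinuousLinearMap.adjoint B) q₀ k| ≤ 1)
    (hq₀_max : ∀ q : H,
      (∀ k, (ContinuousLinearMap.adjoint A) q k
        + (h/2) * |(ContinuousLinearMap.adjoint B) q k| ≤ 1) →
      ⟪A a₀ + B b₀, q⟫ ≤ ⟪A a₀ + B b₀, q₀⟫)
    (hq₀_min : ∀ q : H,
      (∀ k, (ContinuousLinearMap.adjoint A) q k
        + (h/2) * |(ContinuousLinearMap.adjoint B) q k| ≤ 1) →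
      ⟪A a₀ + B b₀, q⟫ = ⟪A a₀ + B b₀, q₀⟫ → ‖q₀‖ ≤ ‖q‖)
    -- the candidate sets J↑, J↓
    (Jup Jdn : Set (Fin P)) (hJup : Iup ⊆ Jup) (hJdn : Idn ⊆ Jdn)
    -- Ã has full rank
    (hfullrank : ∀ u v : EuclideanSpace ℝ (Fin P),
      (∀ i, i ∉ Jup → u i = 0) → (∀ i, i ∉ Jdn → v i = 0) →
      (A + (h/2) • B) u + (A - (h/2) • B) v = 0 → u = 0 ∧ v = 0)
    -- (u,v) = −(Ã^*Ã)⁻¹𝟙, encoded by support and normal equations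
    (u v : EuclideanSpace ℝ (Fin P))
    (hu_supp : ∀ i, i ∉ Jup → u i = 0) (hv_supp : ∀ i, i ∉ Jdn → v i = 0)
    (huv_def : (∀ j ∈ Jup, (ContinuousLinearMap.adjoint (A + (h/2) • B))
        ((A + (h/2) • B) u + (A - (h/2) • B) v) j = -1) ∧
      (∀ j ∈ Jdn, (ContinuousLinearMap.adjoint (A - (h/2) • B))
        ((A + (h/2) • B) u + (A - (h/2) • B) v) j = -1)) :
    -- the characterization, and the identification q₀ = q̃ in that case
    (((Jup = {j : Fin P | (ContinuousLinearMap.adjoint (A + (h/2) • B)) q₀ j = 1} ∧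
       Jdn = {j : Fin P | (ContinuousLinearMap.adjoint (A - (h/2) • B)) q₀ j = 1}) ↔
      ((∀ j ∈ Jup, j ∉ Iup → 0 ≤ u j) ∧ (∀ j ∈ Jdn, j ∉ Idn → 0 ≤ v j) ∧
       (∀ k, k ∉ Jup → (ContinuousLinearMap.adjoint (A + (h/2) • B))
          (-((A + (h/2) • B) u + (A - (h/2) • B) v)) k < 1) ∧
       (∀ k, k ∉ Jdn → (ContinuousLinearMap.adjoint (A - (h/2) • B))
          (-((A + (h/2) • B) u + (A - (h/2) • B) v)) k < 1))) ∧
     (((∀ j ∈ Jup, j ∉ Iup → 0 ≤ u j) ∧ (∀ j ∈ Jdn, j ∉ Idn → 0 ≤ v j) ∧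
       (∀ k, k ∉ Jup → (ContinuousLinearMap.adjoint (A + (h/2) • B))
          (-((A + (h/2) • B) u + (A - (h/2) • B) v)) k < 1) ∧
       (∀ k, k ∉ Jdn → (ContinuousLinearMap.adjoint (A - (h/2) • B))
          (-((A + (h/2) • B) u + (A - (h/2) • B) v)) k < 1)) →
      q₀ = -((A + (h/2) • B) u + (A - (h/2) • B) v))) := by
  subst hIup hIdn
  set M := A + (h / 2) • B
  set N := A - (h / 2) • B
  have hhd : h / 2 * (2 / h) = 1 := by field_simp
  have hαβ (i : Fin P) := add_mul_nonneg_and_sub_mul_nonneg (by positivity) hhd (hcone₀ i).2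
  set γ : EuclideanSpace ℝ (Fin P ⊕ Fin P) :=
    WithLp.toLp 2 (Sum.elim ⇑(a₀ + (2 / h) • b₀) ⇑(a₀ - (2 / h) • b₀))
  set w : EuclideanSpace ℝ (Fin P ⊕ Fin P) := WithLp.toLp 2 (Sum.elim u v)
  have hq₀ : IsMinNormMaximizer (dualFeasibleSet (blockRow M N)) (blockRow M N γ) q₀ := by
    rw [dualFeasibleSet_blockRow_add_sub (by positivity), blockRow_toLp_sumElim,
      add_smul_apply_add_sub_smul_apply A B hhd]
    refine .smul ?_ two_pos
    exact ⟨hq₀_feas, hq₀_max, hq₀_min⟩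
  have hγ : ∀ k, 0 ≤ γ k := Sum.forall.2 ⟨fun i => (hαβ i).1, fun i => (hαβ i).2⟩
  have hγJ : ∀ k ∉ Sum.inl '' Jup ∪ Sum.inr '' Jdn, γ k = 0 :=
    forall_notMem_image_inl_union_image_inr.mpr
      ⟨fun i hi => le_antisymm (not_lt.mp fun hpos => hi (hJup hpos)) (hαβ i).1,
        fun i hi => le_antisymm (not_lt.mp fun hpos => hi (hJdn hpos)) (hαβ i).2⟩
  have hwJ : ∀ k ∉ Sum.inl '' Jup ∪ Sum.inr '' Jdn, w k = 0 :=
    forall_notMem_image_inl_union_image_inr.mpr ⟨hu_supp, hv_supp⟩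
  have hw : ∀ k ∈ Sum.inl '' Jup ∪ Sum.inr '' Jdn,
      adjoint (blockRow M N) (blockRow M N w) k = -1 :=
    forall_mem_image_inl_union_image_inr.mpr <| by
      simpa only [adjoint_blockRow_apply_inl, adjoint_blockRow_apply_inr, w, blockRow_toLp_sumElim]
        using huv_def
  have key := hq₀.extSupport_eq_iff hγ hγJ (eq_zero_of_blockRow_eq_zero hfullrank) hwJ hw
  have key2 := hq₀.eq_neg_apply_of_sign_of_lt_one hγ hγJ hwJ hw
  simp only [extSupport, Set.ext_iff, Sum.forall, inl_mem_image_inl_union_image_inr,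
    inr_mem_image_inl_union_image_inr, adjoint_blockRow_apply_inl, adjoint_blockRow_apply_inr, γ,
    w, blockRow_toLp_sumElim, Set.mem_ofPred_eq, Sum.elim_inl, Sum.elim_inr, PiLp.add_apply,
    PiLp.sub_apply, PiLp.smul_apply, smul_eq_mul, and_assoc, and_imp] at key key2 ⊢
  exact ⟨key, key2⟩

/-- **Characterization of the extended support for the abstract cone-constrained
lasso (C-BP).**  `(a₀,b₀) ∈ C_h^P` is a solution of `Q_0(A a₀ + B b₀)`, `q₀` is the
minimal-norm solution of the dual problem `max ⟨y₀,q⟩` over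
`D = {q : (A^*q)_k + (h/2)|(B^*q)_k| ≤ 1 ∀k}`, and the extended support is
`ext↑ = {j : ((A^*+(h/2)B^*)q₀)_j = 1}`, `ext↓ = {j : ((A^*−(h/2)B^*)q₀)_j = 1}`.
Given `J↑ ⊇ I↑`, `J↓ ⊇ I↓` with `Ã = ((A+(h/2)B)_{J↑}, (A−(h/2)B)_{J↓})` of full
rank and `(u,v) = −(Ã^*Ã)⁻¹𝟙` (encoded by support and normal equations, with
`q̃ = Ã(Ã^*Ã)⁻¹𝟙 = −((A+(h/2)B)u + (A−(h/2)B)v)`):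
`(J↑,J↓) = (ext↑,ext↓)` iff (i) `u ≥ 0` on `J↑∖I↑` and `v ≥ 0` on `J↓∖I↓` and
(ii) the strict dual conditions hold off `J↑, J↓`; in that case `q₀ = q̃`. -/
theorem cbp_extended_support_characterization
    {H : Type*} [NormedAddCommGroup H] [InnerProductSpace ℝ H] [CompleteSpace H]
    {P : ℕ} (A B : EuclideanSpace ℝ (Fin P) →L[ℝ] H)
    (h : ℝ) (hh : 0 < h)
    (a₀ b₀ : EuclideanSpace ℝ (Fin P))
    (hcone₀ : ∀ i, 0 ≤ a₀ i ∧ |b₀ i| ≤ (h/2) * a₀ i)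
    -- (a₀,b₀) is a solution of Q₀(A a₀ + B b₀)
    (hsol : ∀ a b : EuclideanSpace ℝ (Fin P),
      (∀ i, 0 ≤ a i ∧ |b i| ≤ (h/2) * a i) →
      A a + B b = A a₀ + B b₀ → (∑ i, |a₀ i|) ≤ ∑ i, |a i|)
    (Iup Idn : Set (Fin P))
    (hIup : Iup = {i : Fin P | 0 < a₀ i + (2/h) * b₀ i})
    (hIdn : Idn = {i : Fin P | 0 < a₀ i - (2/h) * b₀ i})
    -- q₀ : the minimal-norm solution of the dual problem
    (q₀ : H)
    (hq₀_feas : ∀ k, (ContinuousLinearMap.adjoint A) q₀ k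
      + (h/2) * |(ContinuousLinearMap.adjoint B) q₀ k| ≤ 1)
    (hq₀_max : ∀ q : H,
      (∀ k, (ContinuousLinearMap.adjoint A) q k
        + (h/2) * |(ContinuousLinearMap.adjoint B) q k| ≤ 1) →
      ⟪A a₀ + B b₀, q⟫ ≤ ⟪A a₀ + B b₀, q₀⟫)
    (hq₀_min : ∀ q : H,
      (∀ k, (ContinuousLinearMap.adjoint A) q k
        + (h/2) * |(ContinuousLinearMap.adjoint B) q k| ≤ 1) →
      ⟪A a₀ + B b₀, q⟫ = ⟪A a₀ + B b₀, q₀⟫ → ‖q₀‖ ≤ ‖q‖)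
    -- the candidate sets J↑, J↓
    (Jup Jdn : Set (Fin P)) (hJup : Iup ⊆ Jup) (hJdn : Idn ⊆ Jdn)
    -- Ã has full rank
    (hfullrank : ∀ u v : EuclideanSpace ℝ (Fin P),
      (∀ i, i ∉ Jup → u i = 0) → (∀ i, i ∉ Jdn → v i = 0) →
      (A + (h/2) • B) u + (A - (h/2) • B) v = 0 → u = 0 ∧ v = 0)
    -- (u,v) = −(Ã^*Ã)⁻¹𝟙, encoded by support and normal equations
    (u v : EuclideanSpace ℝ (Fin P))
    (hu_supp : ∀ i, i ∉ Jup → u i = 0) (hv_supp : ∀ i, i ∉ Jdn → v i = 0)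
    (huv_def : (∀ j ∈ Jup, (ContinuousLinearMap.adjoint (A + (h/2) • B))
        ((A + (h/2) • B) u + (A - (h/2) • B) v) j = -1) ∧
      (∀ j ∈ Jdn, (ContinuousLinearMap.adjoint (A - (h/2) • B))
        ((A + (h/2) • B) u + (A - (h/2) • B) v) j = -1)) :
    -- the characterization, and the identification q₀ = q̃ in that case
    (((Jup = {j : Fin P | (ContinuousLinearMap.adjoint (A + (h/2) • B)) q₀ j = 1} ∧
       Jdn = {j : Fin P | (ContinuousLinearMap.adjoint (A - (h/2) • B)) q₀ j = 1}) ↔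
      ((∀ j ∈ Jup, j ∉ Iup → 0 ≤ u j) ∧ (∀ j ∈ Jdn, j ∉ Idn → 0 ≤ v j) ∧
       (∀ k, k ∉ Jup → (ContinuousLinearMap.adjoint (A + (h/2) • B))
          (-((A + (h/2) • B) u + (A - (h/2) • B) v)) k < 1) ∧
       (∀ k, k ∉ Jdn → (ContinuousLinearMap.adjoint (A - (h/2) • B))
          (-((A + (h/2) • B) u + (A - (h/2) • B) v)) k < 1))) ∧
     (((∀ j ∈ Jup, j ∉ Iup → 0 ≤ u j) ∧ (∀ j ∈ Jdn, j ∉ Idn → 0 ≤ v j) ∧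
       (∀ k, k ∉ Jup → (ContinuousLinearMap.adjoint (A + (h/2) • B))
          (-((A + (h/2) • B) u + (A - (h/2) • B) v)) k < 1) ∧
       (∀ k, k ∉ Jdn → (ContinuousLinearMap.adjoint (A - (h/2) • B))
          (-((A + (h/2) • B) u + (A - (h/2) • B) v)) k < 1)) →
      q₀ = -((A + (h/2) • B) u + (A - (h/2) • B) v))) :=
  cbp_extended_support_characterization_general A B h hh a₀ b₀ hcone₀ Iup Idn hIup hIdn q₀ hq₀_feas
    hq₀_max hq₀_min Jup Jdn hJup hJdn hfullrank u v hu_supp hv_supp huv_def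
end
end
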